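/- arXiv:2406.14904 — 11 statements merged into one kernel-verified Lean document; each statement's English description precedes it below -/
import Mathlib

section
/- Let (Ω, P) be a probability space, n ∈ ℕ, and let S_1, …, S_{n+1} : Ω → ℝ be exchangeable random variables. Then for every integer k with 1 ≤ k ≤ n+1, the probability that the number of indices i ∈ {1, …, n+1} with S_i(ω) < S_{n+1}(ω) is at most k − 1 satisfies P({ω : #{i : S_i(ω) < S_{n+1}(ω)} ≤ k − 1}) ≥ k/(n+1). -/
open MeasureTheory
open scoped ENNReal

lemma filter_perm_card {n : ℕ} (σ : Equiv.Perm (Fin (n+1))) (p : Fin (n+1) → Prop)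
    [DecidablePred p] :
    (Finset.univ.filter (fun i => p (σ i))).card = (Finset.univ.filter p).card := by
  apply Finset.card_bij (fun a _ => σ a)
  · intro a ha; simp only [Finset.mem_filter, Finset.mem_univ, true_and] at ha ⊢; exact ha
  · intro a _ b _ h; exact σ.injective h
  · intro b hb
    refine ⟨σ.symm b, ?_, by simp⟩
    simp only [Finset.mem_filter, Finset.mem_univ, true_and, Equiv.apply_symm_apply] at hb ⊢
    exact hb

lemma rank_count_ge {n k : ℕ} (hk1 : 1 ≤ k) (hk2 : k ≤ n + 1) (x : Fin (n+1) → ℝ) :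
    k ≤ (Finset.univ.filter (fun j : Fin (n+1) =>
      (Finset.univ.filter (fun i => x i < x j)).card ≤ k - 1)).card := by
  classical
  set σ := Tuple.sort x with hσ
  have hmono : Monotone (x ∘ σ) := Tuple.monotone_sort x
  have hsub : (Finset.univ.filter (fun m : Fin (n+1) => (m : ℕ) < k)).image σ ⊆
      Finset.univ.filter (fun j => (Finset.univ.filter (fun i => x i < x j)).card ≤ k - 1) := by
    intro j hj
    simp only [Finset.mem_image, Finset.mem_filter, Finset.mem_univ, true_and] at hj ⊢
    obtain ⟨m, hm, rfl⟩ := hj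
    have hre : (Finset.univ.filter (fun i => x i < x (σ m))).card
        = (Finset.univ.filter (fun l => x (σ l) < x (σ m))).card :=
      (filter_perm_card σ (fun i => x i < x (σ m))).symm
    rw [hre]
    have hsub2 : (Finset.univ.filter (fun l => x (σ l) < x (σ m))) ⊆ Finset.Iio m := by
      intro l hl
      simp only [Finset.mem_filter, Finset.mem_univ, true_and] at hl
      simp only [Finset.mem_Iio]
      by_contra hle
      push_neg at hle
      exact absurd (hmono hle) (not_le.mpr hl)
    calc (Finset.univ.filter (fun l => x (σ l) < x (σ m))).card
        ≤ (Finset.Iio m).card := Finset.card_le_card hsub2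
      _ = (m : ℕ) := by simp
      _ ≤ k - 1 := Nat.le_sub_one_of_lt hm
  have hcard : ((Finset.univ.filter (fun m : Fin (n+1) => (m : ℕ) < k)).image σ).card = k := by
    rw [Finset.card_image_of_injective _ σ.injective]
    have : (Finset.univ.filter (fun m : Fin (n+1) => (m : ℕ) < k)).image Fin.val
        = Finset.range k := by
      ext a
      simp only [Finset.mem_image, Finset.mem_filter, Finset.mem_univ, true_and,
        Finset.mem_range]
      constructor
      · rintro ⟨m, hm, rfl⟩; exact hm
      · intro ha; exact ⟨⟨a, lt_of_lt_of_le ha hk2⟩, ha, rfl⟩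
    have h2 := Finset.card_image_of_injective
      (Finset.univ.filter (fun m : Fin (n+1) => (m : ℕ) < k)) Fin.val_injective
    rw [this, Finset.card_range] at h2
    omega
  calc k = _ := hcard.symm
    _ ≤ _ := Finset.card_le_card hsub

/-- Exchangeable real random variables: quantile rank bound. -/
theorem stmt_0 {Ω : Type*} [MeasurableSpace Ω] (P : Measure Ω) [IsProbabilityMeasure P]
    (n : ℕ) (S : Fin (n + 1) → Ω → ℝ) (hmeas : ∀ i, Measurable (S i))
    (hexch : ∀ σ : Equiv.Perm (Fin (n + 1)),
      Measure.map (fun ω => fun i => S (σ i) ω) P = Measure.map (fun ω => fun i => S i ω) P)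
    (k : ℕ) (hk1 : 1 ≤ k) (hk2 : k ≤ n + 1) :
    P {ω | (Finset.univ.filter (fun i : Fin (n + 1) => S i ω < S (Fin.last n) ω)).card ≤ k - 1}
      ≥ (k : ℝ≥0∞) / (n + 1) := by
  classical
  set vec : Ω → (Fin (n+1) → ℝ) := fun ω i => S i ω with hvec
  have hvecm : Measurable vec := measurable_pi_lambda _ hmeas
  set B : Fin (n+1) → Set (Fin (n+1) → ℝ) := fun j =>
    {x | (Finset.univ.filter (fun i => x i < x j)).card ≤ k - 1} with hB
  have hBm : ∀ j, MeasurableSet (B j) := by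
    intro j
    have hcard : Measurable fun x : Fin (n+1) → ℝ =>
        (Finset.univ.filter (fun i => x i < x j)).card := by
      have heq : (fun x : Fin (n+1) → ℝ => (Finset.univ.filter (fun i => x i < x j)).card)
          = fun x => ∑ i, if x i < x j then 1 else 0 := by
        funext x; rw [Finset.card_filter]
      rw [heq]
      exact Finset.measurable_sum _ fun i _ => Measurable.ite
        (measurableSet_lt (measurable_pi_apply i) (measurable_pi_apply j))
        measurable_const measurable_const
    exact hcard (by trivial : MeasurableSet (Set.Iic (k-1)))
  have hAm : ∀ j, MeasurableSet (vec ⁻¹' B j) := fun j => hvecm (hBm j)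
  -- all events have equal probability
  have heq : ∀ j, P (vec ⁻¹' B j) = P (vec ⁻¹' B (Fin.last n)) := by
    intro j
    set σ : Equiv.Perm (Fin (n+1)) := Equiv.swap j (Fin.last n) with hσ
    have hBeq : (fun x : Fin (n+1) → ℝ => x ∘ σ) ⁻¹' B (Fin.last n) = B j := by
      ext x
      simp only [Set.mem_preimage, hB, Set.mem_setOf_eq, Function.comp]
      have hσlast : σ (Fin.last n) = j := Equiv.swap_apply_right _ _
      have h2 : (Finset.univ.filter (fun i => x (σ i) < x (σ (Fin.last n))))
          = Finset.univ.filter (fun i => x (σ i) < x j) := by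
        apply Finset.filter_congr
        intro i _
        rw [hσlast]
      rw [h2, filter_perm_card σ (fun i => x i < x j)]
    have hσm : Measurable (fun ω => fun i => S (σ i) ω) :=
      measurable_pi_lambda _ fun i => hmeas (σ i)
    have h1 : vec ⁻¹' B j = (fun ω => fun i => S (σ i) ω) ⁻¹' B (Fin.last n) := by
      rw [← hBeq]; rfl
    rw [h1, ← Measure.map_apply hσm (hBm (Fin.last n)), hexch σ,
      Measure.map_apply hvecm (hBm (Fin.last n))]
  -- sum bound
  have hsum : (k : ℝ≥0∞) ≤ ∑ j, P (vec ⁻¹' B j) := by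
    have hpt : ∀ ω, (k : ℝ≥0∞) ≤ ∑ j, (vec ⁻¹' B j).indicator (fun _ => (1:ℝ≥0∞)) ω := by
      intro ω
      have : ∑ j, (vec ⁻¹' B j).indicator (fun _ => (1:ℝ≥0∞)) ω
          = ((Finset.univ.filter (fun j : Fin (n+1) =>
              (Finset.univ.filter (fun i => vec ω i < vec ω j)).card ≤ k - 1)).card : ℝ≥0∞) := by
        rw [Finset.card_filter]
        push_cast
        apply Finset.sum_congr rfl
        intro j _
        by_cases hj : ω ∈ vec ⁻¹' B j
        · rw [Set.indicator_of_mem hj]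
          simp only [Set.mem_preimage, hB, Set.mem_setOf_eq] at hj
          simp [hj]
        · rw [Set.indicator_of_notMem hj]
          simp only [Set.mem_preimage, hB, Set.mem_setOf_eq] at hj
          simp [hj]
      rw [this]
      exact_mod_cast rank_count_ge hk1 hk2 (vec ω)
    calc (k : ℝ≥0∞) = ∫⁻ _, (k : ℝ≥0∞) ∂P := by simp
      _ ≤ ∫⁻ ω, ∑ j, (vec ⁻¹' B j).indicator (fun _ => (1:ℝ≥0∞)) ω ∂P := lintegral_mono hpt
      _ = ∑ j, ∫⁻ ω, (vec ⁻¹' B j).indicator (fun _ => (1:ℝ≥0∞)) ω ∂P := by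
          exact lintegral_finset_sum _ fun j _ => measurable_const.indicator (hAm j)
      _ = ∑ j, P (vec ⁻¹' B j) := by
          refine Finset.sum_congr rfl fun j _ => ?_
          exact lintegral_indicator_one (hAm j)
  have hsum2 : (k : ℝ≥0∞) ≤ (n + 1 : ℝ≥0∞) * P (vec ⁻¹' B (Fin.last n)) := by
    calc (k : ℝ≥0∞) ≤ ∑ j, P (vec ⁻¹' B j) := hsum
      _ = ∑ _j : Fin (n+1), P (vec ⁻¹' B (Fin.last n)) := Finset.sum_congr rfl fun j _ => heq j
      _ = (n + 1 : ℝ≥0∞) * P (vec ⁻¹' B (Fin.last n)) := by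
          rw [Finset.sum_const, Finset.card_univ, Fintype.card_fin, nsmul_eq_mul]
          push_cast; ring
  have hfinal : (k : ℝ≥0∞) / (n + 1) ≤ P (vec ⁻¹' B (Fin.last n)) :=
    ENNReal.div_le_of_le_mul (by rwa [mul_comm] at hsum2)
  exact hfinal
end

section
/- Let (Ω, P) be a probability space, n ∈ ℕ, and let S_1, …, S_{n+1} : Ω → ℝ be exchangeable random variables that are almost surely pairwise distinct, i.e. P({ω : S_i(ω) = S_j(ω) for some i ≠ j}) = 0. Then for every integer k with 1 ≤ k ≤ n+1, P({ω : #{i : S_i(ω) < S_{n+1}(ω)} ≤ k − 1}) = k/(n+1). -/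
/-!
For an injective vector `x : ι → α` the ranks `#{j | x j < x i}` are a permutation of
`0, …, card ι - 1`, so for each `j < card ι` the events `{rank x i = j}`, `i : ι`, partition
almost all of the sample space. Exchangeability makes these `card ι` events equally likely, hence
each has probability `1 / card ι`, and `{rank ≤ k - 1}` is the disjoint union of `k` of them.
-/

open MeasureTheory Finset Function
open scoped ENNReal

section Rank

variable {ι α : Type*} [Fintype ι] [LinearOrder α]

def rank (x : ι → α) (i : ι) : ℕ := #{j | x j < x i}

theorem rank_comp_equiv {κ : Type*} [Fintype κ] (x : ι → α) (e : κ ≃ ι) (i : κ) :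
    rank (x ∘ e) i = rank x (e i) := by
  simp only [rank, card_filter]
  exact Fintype.sum_equiv e _ _ fun _ => rfl

theorem rank_lt_card (x : ι → α) (i : ι) : rank x i < Fintype.card ι :=
  card_lt_univ_of_notMem (x := i) (by simp)

theorem rank_lt_rank {x : ι → α} {i i' : ι} (h : x i < x i') : rank x i < rank x i' := by
  refine card_lt_card ((ssubset_iff_of_subset fun j hj => ?_).2 ⟨i, by simpa using h, by simp⟩)
  simp only [mem_filter, mem_univ, true_and] at hj ⊢
  exact hj.trans h

theorem rank_injective {x : ι → α} (hx : Injective x) : Injective (rank x) := by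
  intro i i' h
  by_contra hne
  rcases (hx.ne hne).lt_or_gt with hlt | hlt
  · exact (rank_lt_rank hlt).ne h
  · exact (rank_lt_rank hlt).ne' h

theorem exists_rank_eq {x : ι → α} (hx : Injective x) {j : ℕ} (hj : j < Fintype.card ι) :
    ∃ i, rank x i = j := by
  have himage : univ.image (rank x) = range (Fintype.card ι) :=
    eq_of_subset_of_card_le (fun _ hm => by
        obtain ⟨i, -, rfl⟩ := mem_image.1 hm
        exact mem_range.2 (rank_lt_card x i))
      (by rw [card_range, card_image_of_injective _ (rank_injective hx), card_univ])
  simpa using (himage.symm ▸ mem_range.2 hj : j ∈ univ.image (rank x))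

end Rank

section Measure

variable {ι α : Type*} [Fintype ι] [LinearOrder α] [TopologicalSpace α] [OrderClosedTopology α]
  [SecondCountableTopology α] [MeasurableSpace α] [OpensMeasurableSpace α]

theorem measurable_rank (i : ι) : Measurable fun x : ι → α => rank x i := by
  simp only [rank, card_filter]
  exact Finset.measurable_sum _ fun j _ => Measurable.ite
    (measurableSet_lt (measurable_pi_apply j) (measurable_pi_apply i)) measurable_const
    measurable_const

theorem measurableSet_injective : MeasurableSet {x : ι → α | Injective x} := by
  have hset : {x : ι → α | Injective x} = ⋂ (i) (j), {x | x i = x j → i = j} := by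
    ext x; simp [Injective]
  rw [hset]
  refine .iInter fun i => .iInter fun j => ?_
  by_cases hij : i = j
  · simp [hij]
  · simp only [hij, imp_false]
    exact (measurableSet_eq_fun (f := fun x : ι → α => x i) (g := fun x => x j)
      (measurable_pi_apply i) (measurable_pi_apply j)).compl

variable {μ : Measure (ι → α)}

theorem measure_rank_eq_of_perm_invariant (hinv : ∀ σ : Equiv.Perm ι, μ.map (· ∘ σ) = μ)
    (i i' : ι) (j : ℕ) : μ {x | rank x i = j} = μ {x | rank x i' = j} := by
  classical
  set σ := Equiv.swap i i'
  have hσ : Measurable fun x : ι → α => x ∘ σ := by fun_prop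
  calc μ {x | rank x i = j} = μ.map (· ∘ σ) {x | rank x i = j} := by rw [hinv]
    _ = μ {x | rank (x ∘ σ) i = j} :=
      Measure.map_apply hσ (measurable_rank i (measurableSet_singleton j))
    _ = μ {x | rank x i' = j} := by simp only [rank_comp_equiv, σ, Equiv.swap_apply_left]

theorem sum_measure_rank_eq_one [IsProbabilityMeasure μ] (hinj : ∀ᵐ x ∂μ, Injective x) {j : ℕ}
    (hj : j < Fintype.card ι) : ∑ i, μ {x | rank x i = j} = 1 := by
  rw [ae_iff] at hinj
  have hdisj : Pairwise (AEDisjoint μ on fun i => {x : ι → α | rank x i = j}) := by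
    refine fun i i' hne => measure_mono_null ?_ hinj
    exact fun x hx hx_inj => hne (rank_injective hx_inj (hx.1.trans hx.2.symm))
  have hcover : (⋃ i, {x : ι → α | rank x i = j}) =ᵐ[μ] Set.univ := by
    refine ae_eq_univ.2 (measure_mono_null ?_ hinj)
    exact fun x hx hx_inj => hx (Set.mem_iUnion.2 (exists_rank_eq hx_inj hj))
  rw [← tsum_fintype (L := .unconditional ι), ← measure_iUnion₀ hdisj
      fun i => (measurable_rank i (measurableSet_singleton j)).nullMeasurableSet,
    measure_congr hcover, measure_univ]

theorem measure_rank_eq_inv_card [IsProbabilityMeasure μ]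
    (hinv : ∀ σ : Equiv.Perm ι, μ.map (· ∘ σ) = μ) (hinj : ∀ᵐ x ∂μ, Injective x) (i : ι) {j : ℕ}
    (hj : j < Fintype.card ι) : μ {x | rank x i = j} = (Fintype.card ι : ℝ≥0∞)⁻¹ := by
  refine ENNReal.eq_inv_of_mul_eq_one_left ?_
  rw [mul_comm, ← nsmul_eq_mul, ← card_univ, ← sum_const, ← sum_measure_rank_eq_one hinj hj]
  exact sum_congr rfl fun i' _ => measure_rank_eq_of_perm_invariant hinv i i' j

theorem measure_rank_lt [IsProbabilityMeasure μ]
    (hinv : ∀ σ : Equiv.Perm ι, μ.map (· ∘ σ) = μ) (hinj : ∀ᵐ x ∂μ, Injective x) (i : ι) {k : ℕ}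
    (hk : k ≤ Fintype.card ι) : μ {x | rank x i < k} = k / Fintype.card ι := by
  have hpre : {x : ι → α | rank x i < k} = (fun x => rank x i) ⁻¹' ↑(range k) := by
    ext x; simp
  calc μ {x | rank x i < k} = ∑ j ∈ range k, μ {x | rank x i = j} := by
        rw [hpre, ← sum_measure_preimage_singleton _ fun j _ =>
          measurable_rank i (measurableSet_singleton j)]
        rfl
    _ = ∑ j ∈ range k, (Fintype.card ι : ℝ≥0∞)⁻¹ := sum_congr rfl fun j hj =>
        measure_rank_eq_inv_card hinv hinj i ((mem_range.1 hj).trans_le hk)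
    _ = k / Fintype.card ι := by rw [sum_const, card_range, nsmul_eq_mul, div_eq_mul_inv]

end Measure

/-- Exchangeable, a.s. distinct real random variables: exact quantile rank probability. -/
theorem stmt_1 {Ω : Type*} [MeasurableSpace Ω] (P : Measure Ω) [IsProbabilityMeasure P]
    (n : ℕ) (S : Fin (n + 1) → Ω → ℝ) (hmeas : ∀ i, Measurable (S i))
    (hexch : ∀ σ : Equiv.Perm (Fin (n + 1)),
      Measure.map (fun ω => fun i => S (σ i) ω) P = Measure.map (fun ω => fun i => S i ω) P)
    (hdistinct : P {ω | ∃ i j : Fin (n + 1), i ≠ j ∧ S i ω = S j ω} = 0)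
    (k : ℕ) (hk1 : 1 ≤ k) (hk2 : k ≤ n + 1) :
    P {ω | (Finset.univ.filter (fun i : Fin (n + 1) => S i ω < S (Fin.last n) ω)).card ≤ k - 1}
      = (k : ℝ≥0∞) / (n + 1) := by
  set f : Ω → Fin (n + 1) → ℝ := fun ω i => S i ω
  have hf : Measurable f := measurable_pi_lambda _ hmeas
  have := Measure.isProbabilityMeasure_map (μ := P) hf.aemeasurable
  have hinv : ∀ σ : Equiv.Perm (Fin (n + 1)), (P.map f).map (· ∘ σ) = P.map f := fun σ => by
    rw [Measure.map_map (by fun_prop) hf]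
    exact hexch σ
  have hinj : ∀ᵐ x ∂P.map f, Injective x := by
    refine (ae_map_iff hf.aemeasurable measurableSet_injective).2 (measure_mono_null ?_ hdistinct)
    intro ω hω
    obtain ⟨i, j, hij, hne⟩ := not_injective_iff.1 hω
    exact ⟨i, j, hne, hij⟩
  have hevent : {ω | #{i | S i ω < S (Fin.last n) ω} ≤ k - 1}
      = f ⁻¹' {x | rank x (Fin.last n) < k} := by
    ext ω; exact Nat.le_sub_one_iff_lt hk1
  rw [hevent, ← Measure.map_apply hf (s := {x | rank x (Fin.last n) < k})
      (measurable_rank _ measurableSet_Iio),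
    measure_rank_lt hinv hinj _ (by simpa using hk2)]
  simp
end

section
/- (Validity of Split Conformal Prediction, lower bound.) Let (Ω, P) be a probability space, E a measurable space, n ∈ ℕ, and let (X_1, Y_1), …, (X_{n+1}, Y_{n+1}) be E × ℝ-valued random variables that are exchangeable. Let μ : E → ℝ be a measurable function, α ∈ (0,1), and k = ⌈(1−α)(n+1)⌉, and assume k ≤ n. Define the conformity scores S_i(ω) = |Y_i(ω) − μ(X_i(ω))| for i = 1, …, n, and let Q̂(ω) be the k-th order statistic of the multiset {S_1(ω), …, S_n(ω)}. Then P({ω : μ(X_{n+1}(ω)) − Q̂(ω) ≤ Y_{n+1}(ω) ≤ μ(X_{n+1}(ω)) + Q̂(ω)}) ≥ 1 − α. -/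
/-!
Rank the `n + 1` scores by `strictRank`, the number of strictly smaller scores. The test score is
at most the `k`-th smallest calibration score iff its rank is `< k`. Pointwise, at least `k` of
the `n + 1` points have rank `< k` (sort the scores: the first `k` positions do), so the
`n + 1` events `{rank of point j < k}` have measures summing to at least `k`; by
exchangeability they all have the same measure, which is therefore at least
`k / (n + 1) ≥ 1 - α`.
-/

open MeasureTheory Finset
open scoped ENNReal

theorem Multiset.sort_map_univ_eq_ofFn_comp_sort {α : Type*} [LinearOrder α] {m : ℕ}
    (v : Fin m → α) :
    (univ.val.map v).sort (· ≤ ·) = List.ofFn (v ∘ Tuple.sort v) := by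
  refine List.Perm.eq_of_sortedLE (Multiset.pairwise_sort _ _).sortedLE
    (Tuple.monotone_sort v).sortedLE_ofFn ?_
  refine List.Perm.trans ?_ ((Tuple.sort v).ofFn_comp_perm v).symm
  rw [← Multiset.coe_eq_coe, Multiset.sort_eq, Fin.univ_val_map]

theorem card_filter_comp_equiv {ι κ : Type*} [Fintype ι] [Fintype κ] (e : ι ≃ κ)
    (p : κ → Prop) [DecidablePred p] : #{i | p (e i)} = #{j | p j} :=
  card_equiv e (by simp)

theorem le_orderStatistic_iff {α : Type*} [LinearOrder α] {m : ℕ} (v : Fin m → α) {j : ℕ}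
    (hj : j < m) (x d : α) :
    x ≤ ((univ.val.map v).sort (· ≤ ·)).getD j d ↔ #{i | v i < x} ≤ j := by
  rw [Multiset.sort_map_univ_eq_ofFn_comp_sort, List.getD_eq_getElem _ _ (by simpa using hj),
    List.getElem_ofFn, ← not_lt, ← not_lt, not_iff_not, ← card_filter_comp_equiv (Tuple.sort v)]
  exact (Tuple.lt_card_lt_iff_apply_lt_of_monotone (j := ⟨j, hj⟩) (Tuple.monotone_sort v)).symm

def strictRank {ι α : Type*} [Fintype ι] [LinearOrder α] (v : ι → α) (a : ι) : ℕ :=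
  #{i | v i < v a}

section strictRank

variable {ι α : Type*} [Fintype ι] [LinearOrder α]

theorem strictRank_comp_equiv {κ : Type*} [Fintype κ] (v : ι → α) (e : κ ≃ ι) (a : κ) :
    strictRank (v ∘ e) a = strictRank v (e a) :=
  card_filter_comp_equiv e (fun i => v i < v (e a))

theorem strictRank_le_of_monotone {m : ℕ} {v : Fin m → α} (hv : Monotone v) (p : Fin m) :
    strictRank v p ≤ p := by
  by_contra! h
  exact lt_irrefl _ ((Tuple.lt_card_lt_iff_apply_lt_of_monotone hv).mp h)

theorem le_card_filter_strictRank_lt (v : ι → α) {k : ℕ} (hk : k ≤ Fintype.card ι) :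
    k ≤ #{a | strictRank v a < k} := by
  set e := (Fintype.equivFin ι).symm
  set τ : Fin (Fintype.card ι) ≃ ι := (Tuple.sort (v ∘ e)).trans e
  have hτ : Monotone (v ∘ τ) := Tuple.monotone_sort (v ∘ e)
  calc k = #{p : Fin (Fintype.card ι) | p < k} := by rw [Fin.card_filter_val_lt, min_eq_right hk]
    _ ≤ #{p | strictRank v (τ p) < k} := by
        refine card_le_card fun p => ?_
        simp only [mem_filter_univ, ← strictRank_comp_equiv]
        exact (strictRank_le_of_monotone hτ p).trans_lt
    _ = #{a | strictRank v a < k} := card_filter_comp_equiv τ (fun a => strictRank v a < k)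

theorem strictRank_last {n : ℕ} (v : Fin (n + 1) → α) :
    strictRank v (Fin.last n) = #{i : Fin n | v i.castSucc < v (Fin.last n)} := by
  rw [strictRank, card_filter, card_filter, Fin.sum_univ_castSucc]
  simp

theorem le_orderStatistic_castSucc_iff_strictRank_last_lt {n k : ℕ} (v : Fin (n + 1) → α)
    (hk : 0 < k) (hkn : k ≤ n) (d : α) :
    v (Fin.last n) ≤ ((univ.val.map fun i : Fin n => v i.castSucc).sort (· ≤ ·)).getD (k - 1) d ↔
      strictRank v (Fin.last n) < k := by
  rw [le_orderStatistic_iff _ (by omega), strictRank_last]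
  omega

end strictRank

theorem natCast_mul_measure_univ_le_sum_measure {Ω ι : Type*} [MeasurableSpace Ω] [Fintype ι]
    (P : Measure Ω) {A : ι → Set Ω} [∀ ω, DecidablePred fun i => ω ∈ A i]
    (hA : ∀ i, MeasurableSet (A i)) {r : ℕ}
    (hr : ∀ ω, r ≤ #{i | ω ∈ A i}) :
    r * P Set.univ ≤ ∑ i, P (A i) := by
  have hcount (ω : Ω) : ∑ i, (A i).indicator 1 ω = (#{i | ω ∈ A i} : ℝ≥0∞) := by
    simp only [card_filter, Nat.cast_sum, Nat.cast_ite, Nat.cast_one, Nat.cast_zero,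
      Set.indicator_apply, Pi.one_apply]
  calc r * P Set.univ = ∫⁻ _, (r : ℝ≥0∞) ∂P := (lintegral_const _).symm
    _ ≤ ∫⁻ ω, ∑ i, (A i).indicator 1 ω ∂P :=
        lintegral_mono fun ω => (hcount ω).symm ▸ Nat.cast_le.mpr (hr ω)
    _ = ∑ i, P (A i) := by
        rw [lintegral_finsetSum (f := fun i => (A i).indicator 1) _
          fun i _ => measurable_const.indicator (hA i)]
        simp_rw [lintegral_indicator_one (hA _)]

section Exchangeable

variable {Ω β ι : Type*} [MeasurableSpace Ω] [MeasurableSpace β] [Fintype ι]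

theorem measurable_strictRank {g : β → ℝ} (hg : Measurable g) (a : ι) :
    Measurable fun w : ι → β => strictRank (g ∘ w) a := by
  simp only [strictRank, card_filter]
  refine Finset.measurable_sum _ fun i _ => Measurable.ite ?_ measurable_const measurable_const
  exact measurableSet_lt (hg.comp (measurable_pi_apply i)) (hg.comp (measurable_pi_apply a))

variable [DecidableEq ι] {P : Measure Ω} {V : Ω → ι → β}

theorem measure_strictRank_lt_eq (hV : Measurable V)
    (hexch : ∀ σ : Equiv.Perm ι, P.map (fun ω => V ω ∘ σ) = P.map V)
    {g : β → ℝ} (hg : Measurable g) (k : ℕ) (a b : ι) :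
    P {ω | strictRank (g ∘ V ω) a < k} = P {ω | strictRank (g ∘ V ω) b < k} := by
  set σ := Equiv.swap a b
  have hB : MeasurableSet {w : ι → β | strictRank (g ∘ w) b < k} :=
    measurable_strictRank hg b measurableSet_Iio
  have hVσ : Measurable fun ω => V ω ∘ σ := by fun_prop
  have hpre : {ω | strictRank (g ∘ V ω) a < k} =
      (fun ω => V ω ∘ σ) ⁻¹' {w | strictRank (g ∘ w) b < k} := by
    ext ω
    simp [← Function.comp_assoc, strictRank_comp_equiv, σ]
  rw [hpre, ← Measure.map_apply hVσ hB, hexch σ, Measure.map_apply hV hB]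
  rfl

theorem le_card_mul_measure_strictRank_lt (hV : Measurable V)
    (hexch : ∀ σ : Equiv.Perm ι, P.map (fun ω => V ω ∘ σ) = P.map V)
    {g : β → ℝ} (hg : Measurable g) {k : ℕ} (hk : k ≤ Fintype.card ι) (b : ι) :
    k * P Set.univ ≤ Fintype.card ι * P {ω | strictRank (g ∘ V ω) b < k} := by
  calc k * P Set.univ ≤ ∑ a, P {ω | strictRank (g ∘ V ω) a < k} :=
        natCast_mul_measure_univ_le_sum_measure P (A := fun a => {ω | strictRank (g ∘ V ω) a < k})
          (fun a => (measurable_strictRank hg a).comp hV measurableSet_Iio)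
          (fun ω => le_card_filter_strictRank_lt (g ∘ V ω) hk)
    _ = Fintype.card ι * P {ω | strictRank (g ∘ V ω) b < k} := by
        simp [measure_strictRank_lt_eq hV hexch hg k _ b]

end Exchangeable

/-- Validity of Split Conformal Prediction: lower bound. -/
theorem stmt_2 {Ω E : Type*} [MeasurableSpace Ω] [MeasurableSpace E]
    (P : Measure Ω) [IsProbabilityMeasure P] (n : ℕ)
    (X : Fin (n + 1) → Ω → E) (Y : Fin (n + 1) → Ω → ℝ)
    (hmeas : ∀ i, Measurable (fun ω => (X i ω, Y i ω)))
    (hexch : ∀ σ : Equiv.Perm (Fin (n + 1)),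
      Measure.map (fun ω => fun i => (X (σ i) ω, Y (σ i) ω)) P
        = Measure.map (fun ω => fun i => (X i ω, Y i ω)) P)
    (μ : E → ℝ) (hμ : Measurable μ)
    (α : ℝ) (hα : α ∈ Set.Ioo (0 : ℝ) 1)
    (k : ℕ) (hk : k = ⌈(1 - α) * (n + 1 : ℝ)⌉₊) (hkn : k ≤ n)
    (S : Fin (n + 1) → Ω → ℝ) (hS : ∀ i ω, S i ω = |Y i ω - μ (X i ω)|)
    (Q : Ω → ℝ)
    (hQ : ∀ ω, Q ω =
      ((Finset.univ.val.map (fun i : Fin n => S i.castSucc ω)).sort (· ≤ ·)).getD (k - 1) 0) :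
    P {ω | μ (X (Fin.last n) ω) - Q ω ≤ Y (Fin.last n) ω ∧
           Y (Fin.last n) ω ≤ μ (X (Fin.last n) ω) + Q ω}
      ≥ ENNReal.ofReal (1 - α) := by
  have hα1 : α < 1 := hα.2
  have hk_pos : 0 < k := by rw [hk, Nat.ceil_pos]; nlinarith
  set score : E × ℝ → ℝ := fun p => |p.2 - μ p.1|
  set V : Ω → Fin (n + 1) → E × ℝ := fun ω i => (X i ω, Y i ω)
  have hscore (ω : Ω) : (fun i => S i ω) = score ∘ V ω := funext fun i => hS i ω
  have hevent : {ω | μ (X (Fin.last n) ω) - Q ω ≤ Y (Fin.last n) ω ∧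
      Y (Fin.last n) ω ≤ μ (X (Fin.last n) ω) + Q ω} =
      {ω | strictRank (score ∘ V ω) (Fin.last n) < k} := by
    ext ω
    simp only [Set.mem_ofPred_eq]
    rw [← hscore, ← le_orderStatistic_castSucc_iff_strictRank_last_lt _ hk_pos hkn, ← hQ, hS,
      abs_sub_comm, Set.mem_Icc_iff_abs_le]
    rfl
  have hbound := le_card_mul_measure_strictRank_lt (P := P) (measurable_pi_lambda V hmeas) hexch
    (g := score) (by fun_prop) (k := k) (by rw [Fintype.card_fin]; omega) (Fin.last n)
  rw [measure_univ, mul_one, Fintype.card_fin] at hbound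
  have hk_real : ENNReal.ofReal (1 - α) * (n + 1 : ℕ) ≤ k := by
    rw [← ENNReal.ofReal_natCast, ← ENNReal.ofReal_mul (by linarith), ← ENNReal.ofReal_natCast k]
    refine ENNReal.ofReal_le_ofReal ?_
    rw [hk]
    exact_mod_cast Nat.le_ceil _
  rw [hevent, ge_iff_le]
  exact (ENNReal.mul_le_mul_iff_left (by simp) (by simp)).mp
    (hk_real.trans (hbound.trans_eq (mul_comm _ _)))
end

section
/- (Validity of Conformalized Quantile Regression, upper bound.) Let (Ω, P) be a probability space, E a measurable space, n ∈ ℕ, and let (X_1, Y_1), …, (X_{n+1}, Y_{n+1}) be E × ℝ-valued random variables that are exchangeable. Let l, u : E → ℝ be measurable functions, α ∈ (0,1), and k = ⌈(1−α)(n+1)⌉, and assume k ≤ n. Define S_i(ω) = max{Y_i(ω) − u(X_i(ω)), l(X_i(ω)) − Y_i(ω)} for i = 1, …, n+1, and let Q̂(ω) be the k-th order statistic of the multiset {S_1(ω), …, S_n(ω)}. If moreover the scores S_1, …, S_{n+1} are almost surely pairwise distinct, i.e. P({ω : S_i(ω) = S_j(ω) for some i ≠ j}) = 0, then P({ω : l(X_{n+1}(ω))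 − Q̂(ω) ≤ Y_{n+1}(ω) ≤ u(X_{n+1}(ω)) + Q̂(ω)}) ≤ 1 − α + 1/(n+1). -/
/-!
When the scores are almost surely distinct, exchangeability makes the rank of the test score
`S (Fin.last n)` among all `n + 1` scores uniform on `{1, …, n + 1}`: for a fixed `r`, the events
"the `j`-th score has rank `r`" are equiprobable and almost surely pairwise disjoint. Coverage means
`S (Fin.last n) ≤ Q`, the `k`-th smallest calibration score, which forces that rank to be at most
`k`. Hence the coverage probability is at most `k / (n + 1) < 1 - α + 1 / (n + 1)`.
-/

open MeasureTheory Finset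
open scoped ENNReal

theorem List.countP_lt_le_of_le_getElem {α : Type*} [LinearOrder α] {L : List α}
    (hL : L.Pairwise (· ≤ ·)) {m : ℕ} (hm : m < L.length) {t : α} (ht : t ≤ L[m]) :
    L.countP (· < t) ≤ m := by
  induction L generalizing m with
  | nil => simp at hm
  | cons a L ih =>
    rw [List.pairwise_cons] at hL
    rcases m with _ | m
    · refine (List.countP_eq_zero.2 fun x hx => ?_).le
      rcases List.mem_cons.1 hx with rfl | hx
      · simpa using ht
      · simpa using ht.trans (hL.1 x hx)
    · rw [List.countP_cons]
      have := ih hL.2 (Nat.lt_of_succ_lt_succ hm) ht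
      split <;> omega

theorem Multiset.countP_lt_le_of_le_sort_getD {α : Type*} [LinearOrder α] {M : Multiset α}
    {m : ℕ} (hm : m < M.card) {t d : α} (ht : t ≤ (M.sort (· ≤ ·)).getD m d) :
    M.countP (· < t) ≤ m := by
  have hm' : m < (M.sort (· ≤ ·)).length := by rwa [Multiset.length_sort]
  rw [← Multiset.sort_eq M (· ≤ ·), Multiset.coe_countP]
  rw [List.getD_eq_getElem _ _ hm'] at ht
  exact List.countP_lt_le_of_le_getElem (Multiset.pairwise_sort M _) hm' ht

section Rank

variable {ι α : Type*} [Fintype ι] [LinearOrder α]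

def coordRank (v : ι → α) (j : ι) : ℕ := #{i | v i ≤ v j}

theorem coordRank_pos (v : ι → α) (j : ι) : 0 < coordRank v j :=
  card_pos.2 ⟨j, by simp⟩

theorem coordRank_comp_perm (v : ι → α) (σ : Equiv.Perm ι) (j : ι) :
    coordRank (v ∘ σ) j = coordRank v (σ j) :=
  card_equiv σ (by simp)

theorem coordRank_lt_coordRank {v : ι → α} {i j : ι} (h : v i < v j) :
    coordRank v i < coordRank v j :=
  card_lt_card <| (ssubset_iff_of_subset fun x hx => mem_filter.2
    ⟨mem_univ x, (mem_filter.1 hx).2.trans h.le⟩).2 ⟨j, by simp, by simpa using h⟩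

theorem coordRank_injective {v : ι → α} (hv : Function.Injective v) :
    Function.Injective (coordRank v) := fun i j h => hv <| by
  by_contra hne
  rcases lt_or_gt_of_ne hne with hlt | hlt
  · exact (coordRank_lt_coordRank hlt).ne h
  · exact (coordRank_lt_coordRank hlt).ne' h

theorem coordRank_last_le_of_le_sort_getD {n k : ℕ}
    {v : Fin (n + 1) → α} (hv : Function.Injective v) (hk : 1 ≤ k) (hkn : k ≤ n) {d : α}
    (hle : v (Fin.last n) ≤
      ((univ.val.map fun i : Fin n => v i.castSucc).sort (· ≤ ·)).getD (k - 1) d) :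
    coordRank v (Fin.last n) ≤ k := by
  have hcount := Multiset.countP_lt_le_of_le_sort_getD (by simpa using hkn.trans_lt' (by omega)) hle
  rw [Multiset.countP_map] at hcount
  have hstrict : ∀ i : Fin n, v i.castSucc ≤ v (Fin.last n) ↔ v i.castSucc < v (Fin.last n) :=
    fun i => (hv.ne (Fin.castSucc_lt_last i).ne).le_iff_lt
  rw [coordRank, card_filter, Fin.sum_univ_castSucc, if_pos le_rfl, ← card_filter]
  simp only [hstrict]
  change #{i : Fin n | v i.castSucc < v (Fin.last n)} ≤ k - 1 at hcount
  omega

end Rank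

theorem Nat.ceil_mul_div_lt {x m : ℝ} (hx : 0 ≤ x) (hm : 0 < m) : ⌈x * m⌉₊ / m < x + 1 / m := by
  rw [div_lt_iff₀ hm, add_mul, one_div_mul_cancel hm.ne']
  exact Nat.ceil_lt_add_one (by positivity)

section Exchangeable

variable {Ω ι β : Type*} [MeasurableSpace Ω] [MeasurableSpace β] {P : Measure Ω}

def Exchangeable (P : Measure Ω) (Z : Ω → ι → β) : Prop :=
  ∀ σ : Equiv.Perm ι, P.map (fun ω => Z ω ∘ σ) = P.map Z

theorem Exchangeable.comp {γ : Type*} [MeasurableSpace γ] {Z : Ω → ι → β}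
    (hZ : Exchangeable P Z) (hZm : Measurable Z) {g : β → γ} (hg : Measurable g) :
    Exchangeable P (fun ω i => g (Z ω i)) := by
  intro σ
  have hG : Measurable fun z : ι → β => g ∘ z :=
    measurable_pi_lambda _ fun i => hg.comp (measurable_pi_apply i)
  have hZσ : Measurable fun ω => Z ω ∘ σ :=
    measurable_pi_lambda _ fun i => (measurable_pi_apply (σ i)).comp hZm
  calc P.map (fun ω => (fun i => g (Z ω i)) ∘ σ)
      = (P.map fun ω => Z ω ∘ σ).map (g ∘ ·) := (Measure.map_map hG hZσ).symm
    _ = P.map (fun ω i => g (Z ω i)) := by rw [hZ σ, Measure.map_map hG hZm]; rfl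

theorem Exchangeable.measure_preimage_comp {Z : Ω → ι → β} (hZ : Exchangeable P Z)
    (hZm : Measurable Z) (σ : Equiv.Perm ι) {A : Set (ι → β)} (hA : MeasurableSet A) :
    P {ω | Z ω ∘ σ ∈ A} = P {ω | Z ω ∈ A} := by
  have hZσ : Measurable fun ω => Z ω ∘ σ :=
    measurable_pi_lambda _ fun i => (measurable_pi_apply (σ i)).comp hZm
  change P ((fun ω => Z ω ∘ σ) ⁻¹' A) = P (Z ⁻¹' A)
  rw [← Measure.map_apply hZσ hA, hZ σ, Measure.map_apply hZm hA]

end Exchangeable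

section RandomRank

variable {Ω ι : Type*} [MeasurableSpace Ω] [Fintype ι] {P : Measure Ω} {V : Ω → ι → ℝ}

theorem measurable_coordRank (j : ι) : Measurable fun v : ι → ℝ => coordRank v j := by
  simp only [coordRank, card_filter]
  exact Finset.measurable_sum _ fun i _ =>
    Measurable.ite (measurableSet_le (measurable_pi_apply i) (measurable_pi_apply j))
      measurable_const measurable_const

theorem Exchangeable.measure_coordRank_eq (hV : Exchangeable P V) (hVm : Measurable V)
    (r : ℕ) (i j : ι) :
    P {ω | coordRank (V ω) i = r} = P {ω | coordRank (V ω) j = r} := by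
  classical
  have hσ : ∀ ω, coordRank (V ω) i = coordRank (V ω ∘ Equiv.swap i j) j := fun ω => by
    rw [coordRank_comp_perm, Equiv.swap_apply_right]
  simp_rw [hσ]
  exact hV.measure_preimage_comp hVm _ (measurable_coordRank j (measurableSet_singleton r))

theorem card_mul_measure_le_one [IsProbabilityMeasure P] {A : ι → Set Ω} {p : ℝ≥0∞}
    (hA : ∀ i, NullMeasurableSet (A i) P) (hdisj : Pairwise fun i j => AEDisjoint P (A i) (A j))
    (hp : ∀ i, P (A i) = p) :
    Fintype.card ι * p ≤ 1 := by
  calc Fintype.card ι * p = ∑ i, P (A i) := by simp [hp]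
    _ = P (⋃ i, A i) := by rw [measure_iUnion₀ hdisj hA, tsum_fintype]
    _ ≤ 1 := prob_le_one

theorem Exchangeable.measure_coordRank_eq_le [IsProbabilityMeasure P] (hV : Exchangeable P V)
    (hVm : Measurable V) (hinj : ∀ᵐ ω ∂P, Function.Injective (V ω)) (r : ℕ) (j : ι) :
    P {ω | coordRank (V ω) j = r} ≤ (Fintype.card ι : ℝ≥0∞)⁻¹ := by
  rw [ENNReal.le_inv_iff_mul_le, mul_comm]
  refine card_mul_measure_le_one (A := fun i => {ω | coordRank (V ω) i = r})
    (fun i => (hVm (measurable_coordRank i (measurableSet_singleton r))).nullMeasurableSet)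
    (fun i i' hii' => measure_mono_null ?_ (ae_iff.1 hinj))
    (fun i => hV.measure_coordRank_eq hVm r i j)
  rintro ω ⟨hi, hi'⟩ hω
  exact hii' (coordRank_injective hω (hi.trans hi'.symm))

theorem Exchangeable.measure_coordRank_le_le [IsProbabilityMeasure P] (hV : Exchangeable P V)
    (hVm : Measurable V) (hinj : ∀ᵐ ω ∂P, Function.Injective (V ω)) (k : ℕ) (j : ι) :
    P {ω | coordRank (V ω) j ≤ k} ≤ k / Fintype.card ι := by
  have hsub : {ω | coordRank (V ω) j ≤ k} ⊆ ⋃ r ∈ Icc 1 k, {ω | coordRank (V ω) j = r} :=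
    fun ω hω => Set.mem_biUnion (mem_Icc.2 ⟨coordRank_pos _ _, hω⟩) rfl
  calc P {ω | coordRank (V ω) j ≤ k}
      ≤ ∑ r ∈ Icc 1 k, P {ω | coordRank (V ω) j = r} :=
        (measure_mono hsub).trans (measure_biUnion_finset_le _ _)
    _ ≤ ∑ _r ∈ Icc 1 k, (Fintype.card ι : ℝ≥0∞)⁻¹ :=
        sum_le_sum fun r _ => hV.measure_coordRank_eq_le hVm hinj r j
    _ = k / Fintype.card ι := by simp [div_eq_mul_inv]

end RandomRank

/-- Validity of Conformalized Quantile Regression: upper bound. -/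
theorem stmt_5 {Ω E : Type*} [MeasurableSpace Ω] [MeasurableSpace E]
    (P : Measure Ω) [IsProbabilityMeasure P] (n : ℕ)
    (X : Fin (n + 1) → Ω → E) (Y : Fin (n + 1) → Ω → ℝ)
    (hmeas : ∀ i, Measurable (fun ω => (X i ω, Y i ω)))
    (hexch : ∀ σ : Equiv.Perm (Fin (n + 1)),
      Measure.map (fun ω => fun i => (X (σ i) ω, Y (σ i) ω)) P
        = Measure.map (fun ω => fun i => (X i ω, Y i ω)) P)
    (l u : E → ℝ) (hl : Measurable l) (hu : Measurable u)
    (α : ℝ) (hα : α ∈ Set.Ioo (0 : ℝ) 1)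
    (k : ℕ) (hk : k = ⌈(1 - α) * (n + 1 : ℝ)⌉₊) (hkn : k ≤ n)
    (S : Fin (n + 1) → Ω → ℝ) (hS : ∀ i ω, S i ω = max (Y i ω - u (X i ω)) (l (X i ω) - Y i ω))
    (hdistinct : P {ω | ∃ i j : Fin (n + 1), i ≠ j ∧ S i ω = S j ω} = 0)
    (Q : Ω → ℝ)
    (hQ : ∀ ω, Q ω =
      ((Finset.univ.val.map (fun i : Fin n => S i.castSucc ω)).sort (· ≤ ·)).getD (k - 1) 0) :
    P {ω | l (X (Fin.last n) ω) - Q ω ≤ Y (Fin.last n) ω ∧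
           Y (Fin.last n) ω ≤ u (X (Fin.last n) ω) + Q ω}
      ≤ ENNReal.ofReal (1 - α + 1 / (n + 1 : ℝ)) := by
  have h1α : 0 < 1 - α := sub_pos.2 hα.2
  have hk1 : 1 ≤ k := hk ▸ Nat.ceil_pos.2 (by positivity)
  set Z : Ω → Fin (n + 1) → E × ℝ := fun ω i => (X i ω, Y i ω)
  set score : E × ℝ → ℝ := fun p => max (p.2 - u p.1) (l p.1 - p.2)
  set V : Ω → Fin (n + 1) → ℝ := fun ω i => S i ω
  have hZm : Measurable Z := measurable_pi_lambda _ hmeas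
  have hscore : Measurable score := by fun_prop
  have hV_eq : V = fun ω i => score (Z ω i) := funext fun ω => funext fun i => hS i ω
  have hVm : Measurable V :=
    hV_eq ▸ measurable_pi_lambda _ fun i => hscore.comp ((measurable_pi_apply i).comp hZm)
  have hV : Exchangeable P V := hV_eq ▸ Exchangeable.comp (Z := Z) hexch hZm hscore
  have hinj : ∀ᵐ ω ∂P, Function.Injective (V ω) :=
    measure_mono_null (fun ω hω => by simpa [Function.Injective, and_comm] using hω) hdistinct
  have hcover : {ω | l (X (Fin.last n) ω) - Q ω ≤ Y (Fin.last n) ω ∧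
      Y (Fin.last n) ω ≤ u (X (Fin.last n) ω) + Q ω} ≤ᵐ[P]
      {ω | coordRank (V ω) (Fin.last n) ≤ k} := by
    filter_upwards [hinj] with ω hω ⟨hlo, hhi⟩
    refine coordRank_last_le_of_le_sort_getD (d := 0) hω hk1 hkn ?_
    rw [← hQ]
    exact (hS _ _).trans_le (max_le (by linarith) (by linarith))
  calc _ ≤ P {ω | coordRank (V ω) (Fin.last n) ≤ k} := measure_mono_ae hcover
    _ ≤ k / (n + 1 : ℕ) := by simpa using hV.measure_coordRank_le_le hVm hinj k (Fin.last n)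
    _ = ENNReal.ofReal (k / (n + 1 : ℝ)) := by
      rw [ENNReal.ofReal_div_of_pos (by positivity)]
      norm_cast
    _ ≤ ENNReal.ofReal (1 - α + 1 / (n + 1 : ℝ)) := ENNReal.ofReal_le_ofReal <| by
      simpa [hk] using (Nat.ceil_mul_div_lt h1α.le (by positivity : (0 : ℝ) < n + 1)).le
end

section
/- (Boundedness of the ACI iterates.) Let γ > 0, α* ∈ (0,1), and let (α_t)_{t≥1} and (err_t)_{t≥1} be real sequences such that α_1 ∈ [0,1], err_t ∈ {0,1} for every t, α_{t+1} = α_t + γ(α* − err_t) for every t ≥ 1, and such that for every t, if α_t < 0 then err_t = 0 and if α_t > 1 then err_t = 1. Then for every t ≥ 1, α_t ∈ [−γ, 1+γ]. -/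
/-- Boundedness of the ACI iterates. -/
theorem stmt_6 (γ αstar : ℝ) (hγ : 0 < γ) (hαstar : αstar ∈ Set.Ioo (0 : ℝ) 1)
    (α err : ℕ → ℝ) (hα1 : α 1 ∈ Set.Icc (0 : ℝ) 1)
    (herr : ∀ t, 1 ≤ t → err t = 0 ∨ err t = 1)
    (hrec : ∀ t, 1 ≤ t → α (t + 1) = α t + γ * (αstar - err t))
    (hlow : ∀ t, 1 ≤ t → α t < 0 → err t = 0)
    (hhigh : ∀ t, 1 ≤ t → 1 < α t → err t = 1) :
    ∀ t, 1 ≤ t → α t ∈ Set.Icc (-γ) (1 + γ) := by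
  intro t ht
  induction t, ht using Nat.le_induction with
  | base =>
    constructor
    · linarith [hα1.1]
    · linarith [hα1.2]
  | succ n hn ih =>
    obtain ⟨h1, h2⟩ := ih
    obtain ⟨hs1, hs2⟩ := hαstar
    rw [hrec n hn]
    rcases herr n hn with he | he
    · have hle : α n ≤ 1 := by
        by_contra h
        have := hhigh n hn (by linarith)
        rw [he] at this; linarith
      rw [he]
      constructor <;> nlinarith
    · have hge : 0 ≤ α n := by
        by_contra h
        have := hlow n hn (by linarith)
        rw [he] at this; linarith
      rw [he]
      constructor <;> nlinarith
end

section
/- (Finite-sample coverage bound for ACI.) Let γ > 0, α* ∈ (0,1), and let (α_t)_{t≥1} and (err_t)_{t≥1} be real sequences such that α_1 ∈ [0,1], err_t ∈ {0,1} for every t, α_{t+1} = α_t + γ(α* − err_t) for every t ≥ 1, and such that for every t, if α_t < 0 then err_t = 0 and if α_t > 1 then err_t = 1. Then for every T ∈ ℕ with T ≥ 1, |(1/T)·Σ_{t=1}^T err_t − α*| ≤ (max{α_1, 1 − α_1} + γ)/(Tγ). -/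
/-- Finite-sample coverage bound for ACI. -/
theorem stmt_7 (γ αstar : ℝ) (hγ : 0 < γ) (hαstar : αstar ∈ Set.Ioo (0 : ℝ) 1)
    (α err : ℕ → ℝ) (hα1 : α 1 ∈ Set.Icc (0 : ℝ) 1)
    (herr : ∀ t, 1 ≤ t → err t = 0 ∨ err t = 1)
    (hrec : ∀ t, 1 ≤ t → α (t + 1) = α t + γ * (αstar - err t))
    (hlow : ∀ t, 1 ≤ t → α t < 0 → err t = 0)
    (hhigh : ∀ t, 1 ≤ t → 1 < α t → err t = 1) :
    ∀ T : ℕ, 1 ≤ T →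
      |(1 / (T : ℝ)) * ∑ t ∈ Finset.Icc 1 T, err t - αstar|
        ≤ (max (α 1) (1 - α 1) + γ) / ((T : ℝ) * γ) := by
  obtain ⟨hs0, hs1⟩ := hαstar
  obtain ⟨ha0, ha1⟩ := hα1
  -- invariant: α t ∈ [-γ, 1+γ]
  have hinv : ∀ t, 1 ≤ t → -γ ≤ α t ∧ α t ≤ 1 + γ := by
    intro t ht
    induction t, ht using Nat.le_induction with
    | base => constructor <;> nlinarith
    | succ n hn ih =>
      obtain ⟨ihl, ihr⟩ := ih
      rw [hrec n hn]
      rcases lt_or_ge (α n) 0 with h | h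
      · rw [hlow n hn h]; constructor <;> nlinarith
      · rcases lt_or_ge 1 (α n) with h' | h'
        · rw [hhigh n hn h']; constructor <;> nlinarith
        · rcases herr n hn with he | he <;> rw [he] <;> constructor <;> nlinarith
  -- telescoping
  have htel : ∀ T, 1 ≤ T →
      γ * ∑ t ∈ Finset.Icc 1 T, err t = γ * T * αstar + α 1 - α (T + 1) := by
    intro T hT
    induction T, hT using Nat.le_induction with
    | base =>
      simp only [Finset.Icc_self, Finset.sum_singleton]
      have := hrec 1 le_rfl
      push_cast
      linarith
    | succ n hn ih =>
      rw [Finset.sum_Icc_succ_top (by omega : 1 ≤ n + 1)]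
      have := hrec (n + 1) (by omega)
      push_cast
      push_cast at ih
      linarith
  intro T hT
  have hTpos : (0 : ℝ) < T := by exact_mod_cast hT
  have hkey := htel T hT
  have hinvT := hinv (T + 1) (by omega)
  have hmax : |α 1 - α (T + 1)| ≤ max (α 1) (1 - α 1) + γ := by
    rw [abs_le]
    constructor
    · have : 1 - α 1 ≤ max (α 1) (1 - α 1) := le_max_right _ _
      nlinarith [hinvT.2]
    · have : α 1 ≤ max (α 1) (1 - α 1) := le_max_left _ _
      nlinarith [hinvT.1]
  have heq : (1 / (T : ℝ)) * ∑ t ∈ Finset.Icc 1 T, err t - αstar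
      = (α 1 - α (T + 1)) / ((T : ℝ) * γ) := by
    field_simp
    nlinarith [hkey]
  rw [heq, abs_div, abs_of_pos (by positivity : (0:ℝ) < (T:ℝ) * γ)]
  exact div_le_div_of_nonneg_right hmax (by positivity) |>.trans_eq rfl
end

section
/- (Asymptotic marginal coverage of ACI.) Let γ > 0, α* ∈ (0,1), and let (α_t)_{t≥1} and (err_t)_{t≥1} be real sequences such that α_1 ∈ [0,1], err_t ∈ {0,1} for every t, α_{t+1} = α_t + γ(α* − err_t) for every t ≥ 1, and such that for every t, if α_t < 0 then err_t = 0 and if α_t > 1 then err_t = 1. Then lim_{T→∞} (1/T)·Σ_{t=1}^T err_t = α*. -/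
open Filter

/-- Asymptotic marginal coverage of ACI. -/
theorem stmt_8 (γ αstar : ℝ) (hγ : 0 < γ) (hαstar : αstar ∈ Set.Ioo (0 : ℝ) 1)
    (α err : ℕ → ℝ) (hα1 : α 1 ∈ Set.Icc (0 : ℝ) 1)
    (herr : ∀ t, 1 ≤ t → err t = 0 ∨ err t = 1)
    (hrec : ∀ t, 1 ≤ t → α (t + 1) = α t + γ * (αstar - err t))
    (hlow : ∀ t, 1 ≤ t → α t < 0 → err t = 0)
    (hhigh : ∀ t, 1 ≤ t → 1 < α t → err t = 1) :
    Tendsto (fun T : ℕ => (1 / (T : ℝ)) * ∑ t ∈ Finset.Icc 1 T, err t)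
      atTop (nhds αstar) := by
  obtain ⟨hs0, hs1⟩ := hαstar
  obtain ⟨ha0, ha1⟩ := hα1
  -- boundedness of α t
  have hbdd : ∀ t, 1 ≤ t → α t ∈ Set.Icc (-γ) (1 + γ) := by
    intro t ht
    induction t with
    | zero => omega
    | succ n ih =>
      rcases Nat.lt_or_ge 1 (n + 1) with hn | hn
      · have hn1 : 1 ≤ n := by omega
        have hb := ih hn1
        rw [hrec n hn1]
        rcases lt_trichotomy (α n) 0 with h | h | h
        · rw [hlow n hn1 h]
          constructor
          · nlinarith [hb.1]
          · nlinarith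
        · rcases herr n hn1 with he | he <;> rw [he] <;>
            constructor <;> nlinarith [hb.1, hb.2, le_of_lt hs0,
              (by rcases lt_or_ge 1 (α n) with h' | h'
                  · exact absurd (hhigh n hn1 h') (by
                      rcases herr n hn1 with he' | he' <;> simp_all <;> nlinarith)
                  · exact h' : α n ≤ 1)]
        · rcases lt_or_ge 1 (α n) with h' | h'
          · rw [hhigh n hn1 h']
            constructor <;> nlinarith [hb.2]
          · rcases herr n hn1 with he | he <;> rw [he] <;>
              constructor <;> nlinarith
      · have : n = 0 := by omega
        subst this
        exact ⟨by linarith, by linarith⟩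
  -- telescoping identity
  have hsum : ∀ T : ℕ, α (T + 1) = α 1 + γ * (T * αstar - ∑ t ∈ Finset.Icc 1 T, err t) := by
    intro T
    induction T with
    | zero => simp
    | succ n ih =>
      rw [Finset.sum_Icc_succ_top (by omega), hrec (n + 1) (by omega), ih]
      push_cast
      ring
  -- rewrite the average
  have key : ∀ T : ℕ, 1 ≤ T →
      (1 / (T : ℝ)) * ∑ t ∈ Finset.Icc 1 T, err t
        = αstar + (α 1 - α (T + 1)) / (γ * T) := by
    intro T hT
    have hT' : (0 : ℝ) < T := by exact_mod_cast hT
    have := hsum T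
    field_simp
    nlinarith [hsum T]
  have hTend : Tendsto (fun T : ℕ => αstar + (α 1 - α (T + 1)) / (γ * T)) atTop (nhds αstar) := by
    have h0 : Tendsto (fun T : ℕ => (α 1 - α (T + 1)) / (γ * T)) atTop (nhds 0) := by
      apply squeeze_zero_norm' (a := fun T : ℕ => (1 + 2 * γ) / (γ * T))
      · filter_upwards [eventually_ge_atTop 1] with T hT
        have hT' : (0 : ℝ) < T := by exact_mod_cast hT
        have hb := hbdd (T + 1) (by omega)
        have habs : |α 1 - α (T + 1)| ≤ 1 + 2 * γ := by
          rw [abs_le]; constructor <;> [nlinarith [hb.2]; nlinarith [hb.1]]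
        have hpos : (0 : ℝ) < γ * T := by positivity
        calc ‖(α 1 - α (T + 1)) / (γ * T)‖
            = |α 1 - α (T + 1)| / (γ * T) := by
              rw [Real.norm_eq_abs, abs_div, abs_of_pos hpos]
          _ ≤ (1 + 2 * γ) / (γ * T) := by gcongr
      · have : Tendsto (fun T : ℕ => (T : ℝ)) atTop atTop := tendsto_natCast_atTop_atTop
        have := Tendsto.const_mul_atTop hγ this
        simpa using (this.const_div_atTop ((1 + 2 * γ)))
    simpa using tendsto_const_nhds.add h0
  apply hTend.congr'
  filter_upwards [eventually_ge_atTop 1] with T hT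
  exact (key T hT).symm
end

section
/- (Explicit inverse of the Markov-1 Toeplitz matrix.) Let n ≥ 2 and λ ∈ ℝ with λ² ≠ 1, and let Λ be the n × n real matrix with entries Λ_{ij} = λ^{|i − j|}. Define the n × n tridiagonal matrix B by B_{11} = B_{nn} = 1, B_{ii} = 1 + λ² for 1 < i < n, B_{i,i+1} = B_{i+1,i} = −λ for 1 ≤ i ≤ n−1, and B_{ij} = 0 whenever |i − j| ≥ 2. Then Λ · ((1/(1 − λ²))·B) equals the n × n identity matrix; in particular Λ⁻¹ = (1/(1 − λ²))·B. -/
/-- Explicit inverse of the Markov-1 Toeplitz matrix. -/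
theorem stmt_11 (n : ℕ) (hn : 2 ≤ n) (lam : ℝ) (hlam : lam ^ 2 ≠ 1)
    (Λ : Matrix (Fin n) (Fin n) ℝ)
    (hΛ : ∀ i j : Fin n, Λ i j = lam ^ ((i : ℤ) - (j : ℤ)).natAbs)
    (B : Matrix (Fin n) (Fin n) ℝ)
    (hBdiag : ∀ i : Fin n, B i i =
      if (i : ℕ) = 0 ∨ (i : ℕ) = n - 1 then 1 else 1 + lam ^ 2)
    (hBoff : ∀ i j : Fin n, ((i : ℤ) - (j : ℤ)).natAbs = 1 → B i j = -lam)
    (hBzero : ∀ i j : Fin n, 2 ≤ ((i : ℤ) - (j : ℤ)).natAbs → B i j = 0) :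
    Λ * ((1 / (1 - lam ^ 2)) • B) = 1 ∧ Λ⁻¹ = (1 / (1 - lam ^ 2)) • B := by
  have hne : (1 : ℝ) - lam ^ 2 ≠ 0 := fun h => hlam (by linarith)
  have key : Λ * B = (1 - lam ^ 2) • (1 : Matrix (Fin n) (Fin n) ℝ) := by
    ext i j
    rw [Matrix.mul_apply, Matrix.smul_apply, Matrix.one_apply, smul_eq_mul]
    have hfil : ∑ k, Λ i k * B k j
        = ∑ k ∈ Finset.univ.filter (fun k : Fin n => ((k:ℤ) - (j:ℤ)).natAbs ≤ 1),
            Λ i k * B k j := by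
      rw [Finset.sum_filter_of_ne]
      intro k _ hk
      by_contra h
      exact hk (by rw [hBzero k j (by omega)]; ring)
    rw [hfil]
    by_cases hj0 : (j:ℕ) = 0
    · have hk0 : (0 : ℕ) < n := by omega
      have hk1 : (1 : ℕ) < n := by omega
      have hset : Finset.univ.filter (fun k : Fin n => ((k:ℤ) - (j:ℤ)).natAbs ≤ 1)
          = {(⟨0, hk0⟩ : Fin n), ⟨1, hk1⟩} := by
        ext k
        simp only [Finset.mem_filter, Finset.mem_univ, true_and, Finset.mem_insert,
          Finset.mem_singleton, Fin.ext_iff]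
        omega
      have hjk : j = ⟨0, hk0⟩ := Fin.ext hj0
      rw [hset, Finset.sum_pair (by simp [Fin.ext_iff])]
      rw [hΛ, hΛ, hjk]
      rw [hBdiag ⟨0, hk0⟩]
      rw [hBoff ⟨1, hk1⟩ ⟨0, hk0⟩ (by simp)]
      simp only [Fin.val_mk, eq_self_iff_true, true_or, if_true]
      by_cases hij : i = (⟨0, hk0⟩ : Fin n)
      · subst hij
        simp [hjk]
        ring
      · have hi1 : 1 ≤ (i:ℕ) := by
          rcases Nat.eq_zero_or_pos (i:ℕ) with h | h
          · exact absurd (Fin.ext h) hij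
          · exact h
        have h1 : ((i:ℤ) - ((⟨0, hk0⟩ : Fin n):ℤ)).natAbs = ((i:ℕ) - 1) + 1 := by
          simp only [Fin.val_mk] <;> omega
        have h2 : ((i:ℤ) - ((⟨1, hk1⟩ : Fin n):ℤ)).natAbs = (i:ℕ) - 1 := by
          simp only [Fin.val_mk] <;> omega
        rw [h1, h2, if_neg hij, pow_succ]
        ring
    · by_cases hjn : (j:ℕ) = n - 1
      · have hk0 : n - 2 < n := by omega
        have hk1 : n - 1 < n := by omega
        have hset : Finset.univ.filter (fun k : Fin n => ((k:ℤ) - (j:ℤ)).natAbs ≤ 1)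
            = {(⟨n-2, hk0⟩ : Fin n), ⟨n-1, hk1⟩} := by
          ext k
          simp only [Finset.mem_filter, Finset.mem_univ, true_and, Finset.mem_insert,
            Finset.mem_singleton, Fin.ext_iff]
          have := k.isLt
          omega
        have hjk : j = ⟨n-1, hk1⟩ := Fin.ext hjn
        rw [hset, Finset.sum_pair (by simp [Fin.ext_iff] <;> omega)]
        rw [hΛ, hΛ, hjk]
        rw [hBoff ⟨n-2, hk0⟩ ⟨n-1, hk1⟩ (by simp <;> omega)]
        rw [hBdiag ⟨n-1, hk1⟩]
        simp only [Fin.val_mk, eq_self_iff_true, or_true, if_true]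
        by_cases hij : i = (⟨n-1, hk1⟩ : Fin n)
        · subst hij
          have h1 : (((⟨n-1, hk1⟩ : Fin n):ℤ) - ((⟨n-2, hk0⟩ : Fin n):ℤ)).natAbs = 1 := by
            simp only [Fin.val_mk] <;> omega
          have h2 : (((⟨n-1, hk1⟩ : Fin n):ℤ) - ((⟨n-1, hk1⟩ : Fin n):ℤ)).natAbs = 0 := by
            simp only [Fin.val_mk] <;> omega
          rw [h1, h2, if_pos rfl]
          ring
        · have hi1 : (i:ℕ) ≤ n - 2 := by
          -- i ≠ n-1 and i < n
            have := i.isLt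
            have : (i:ℕ) ≠ n - 1 := fun h => hij (Fin.ext h)
            omega
        -- here  natAbs(i - (n-2)) = (n-2-i), natAbs(i-(n-1)) = n-2-i+1
          set a := n - 2 - (i:ℕ) with ha
          have h1 : ((i:ℤ) - ((⟨n-2, hk0⟩ : Fin n):ℤ)).natAbs = a := by
            simp only [Fin.val_mk] <;> omega
          have h2 : ((i:ℤ) - ((⟨n-1, hk1⟩ : Fin n):ℤ)).natAbs = a + 1 := by
            have := i.isLt
            simp only [Fin.val_mk] <;> omega
          rw [h1, h2, if_neg hij, pow_succ]
          ring
      · -- interior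
        have hj1 : 1 ≤ (j:ℕ) := by omega
        have hjn' : (j:ℕ) + 1 < n := by have := j.isLt; omega
        have hkm : (j:ℕ) - 1 < n := by omega
        have hset : Finset.univ.filter (fun k : Fin n => ((k:ℤ) - (j:ℤ)).natAbs ≤ 1)
            = {(⟨(j:ℕ)-1, hkm⟩ : Fin n), j, ⟨(j:ℕ)+1, hjn'⟩} := by
          ext k
          simp only [Finset.mem_filter, Finset.mem_univ, true_and, Finset.mem_insert,
            Finset.mem_singleton, Fin.ext_iff]
          omega
        rw [hset]
        rw [Finset.sum_insert (by simp [Fin.ext_iff] <;> omega),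
            Finset.sum_pair (by simp [Fin.ext_iff] <;> omega)]
        rw [hΛ, hΛ, hΛ]
        rw [hBoff ⟨(j:ℕ)-1, hkm⟩ j (by simp <;> omega)]
        rw [hBoff ⟨(j:ℕ)+1, hjn'⟩ j (by simp <;> omega)]
        rw [hBdiag j]
        rw [if_neg (by push_neg; exact ⟨hj0, hjn⟩)]
        by_cases hij : i = j
        · subst hij
          have h1 : ((i:ℤ) - ((⟨(i:ℕ)-1, hkm⟩ : Fin n):ℤ)).natAbs = 1 := by
            simp only [Fin.val_mk] <;> omega
          have h2 : ((i:ℤ) - (i:ℤ)).natAbs = 0 := by omega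
          have h3 : ((i:ℤ) - ((⟨(i:ℕ)+1, hjn'⟩ : Fin n):ℤ)).natAbs = 1 := by
            simp only [Fin.val_mk] <;> omega
          rw [h1, h2, h3, if_pos rfl]
          ring
        · rw [if_neg hij]
          rcases Nat.lt_or_ge (i:ℕ) (j:ℕ) with hlt | hge
          · set a := (j:ℕ) - 1 - (i:ℕ) with ha
            have h1 : ((i:ℤ) - ((⟨(j:ℕ)-1, hkm⟩ : Fin n):ℤ)).natAbs = a := by
              simp only [Fin.val_mk] <;> omega
            have h2 : ((i:ℤ) - (j:ℤ)).natAbs = a + 1 := by omega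
            have h3 : ((i:ℤ) - ((⟨(j:ℕ)+1, hjn'⟩ : Fin n):ℤ)).natAbs = a + 2 := by
              simp only [Fin.val_mk] <;> omega
            rw [h1, h2, h3, pow_succ, pow_succ, pow_succ]
            ring
          · have hne' : (i:ℕ) ≠ (j:ℕ) := fun h => hij (Fin.ext h)
            have hgt : (j:ℕ) < (i:ℕ) := by omega
            set a := (i:ℕ) - (j:ℕ) - 1 with ha
            have h1 : ((i:ℤ) - ((⟨(j:ℕ)-1, hkm⟩ : Fin n):ℤ)).natAbs = a + 2 := by
              simp only [Fin.val_mk] <;> omega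
            have h2 : ((i:ℤ) - (j:ℤ)).natAbs = a + 1 := by omega
            have h3 : ((i:ℤ) - ((⟨(j:ℕ)+1, hjn'⟩ : Fin n):ℤ)).natAbs = a := by
              simp only [Fin.val_mk] <;> omega
            rw [h1, h2, h3, pow_succ, pow_succ, pow_succ]
            ring
  have hmain : Λ * ((1 / (1 - lam ^ 2)) • B) = 1 := by
    rw [Matrix.mul_smul, key, smul_smul, one_div, inv_mul_cancel₀ hne, one_smul]
  exact ⟨hmain, Matrix.inv_eq_right_inv hmain⟩
end

section
/- (Uniform boundedness of per-cell error sums under WACI.) Let n ≥ 1, γ > 0, λ ∈ (0,1), α* ∈ (0,1). Let idx : ℕ → {1, …, n}, let (err_t)_{t≥1} be a sequence with err_t ∈ {0,1} for every t, and let (α_t)_{t≥1} be a sequence of vectors in ℝ^n satisfying α_{t+1}[j] = α_t[j] + γ·λ^{|idx(t) − j|}·(α* − err_t) for every t ≥ 1 and j ∈ {1, …, n}. Assume there exists ν ∈ ℕ such that α_t[j] ∈ [−ν, 1+ν] for every t ≥ 1 and every j ∈ {1, …, n}. Then there exists a constant C ≥ 0 such that for every T ≥ 1 and every i ∈ {1,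 …, n}, | Σ_{t ≤ T, idx(t) = i} (α* − err_t) | ≤ C. -/
/-!
Summing the recursion over `t ≤ T`, the displacement `α (T + 1) j - α 1 j`, which lies in
`[-(1 + 2ν), 1 + 2ν]`, equals `γ (K s)_j`, where `s_k` is the error sum of cell `k` and
`K = (lam ^ |j - k|)` is the Kac–Murdock–Szegő matrix. This matrix is inverted by bidiagonal
elimination: with `z_j = ∑_{k ≤ j} lam ^ (j - k) s_k` one has
`(1 - lam²) z_j = (K s)_j - lam (K s)_{j+1}`, `z_{n-1} = (K s)_{n-1}` and `s_j = z_j - lam z_{j-1}`,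
so every `s_j` is bounded by `2 / (1 - lam)` times `max_j |(K s)_j|`.
-/

open Finset

noncomputable section

/-- The Kac–Murdock–Szegő matrix `(lam ^ |j - k|)_{j, k < n}` applied to `s`. -/
def kmsMulVec (lam : ℝ) (n : ℕ) (s : ℕ → ℝ) (j : ℕ) : ℝ :=
  ∑ k ∈ range n, lam ^ ((k : ℤ) - j).natAbs * s k

def geomPrefix (lam : ℝ) (s : ℕ → ℝ) (j : ℕ) : ℝ :=
  ∑ k ∈ range (j + 1), lam ^ (j - k) * s k

end

section KacMurdockSzego

variable {lam : ℝ} {s : ℕ → ℝ}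

@[simp]
lemma geomPrefix_zero : geomPrefix lam s 0 = s 0 := by
  simp [geomPrefix]

lemma geomPrefix_succ (j : ℕ) :
    geomPrefix lam s (j + 1) = lam * geomPrefix lam s j + s (j + 1) := by
  rw [geomPrefix, sum_range_succ, Nat.sub_self, pow_zero, one_mul, geomPrefix, mul_sum]
  congr 1
  refine sum_congr rfl fun k hk => ?_
  rw [Nat.sub_add_comm (mem_range_succ_iff.mp hk), pow_succ]
  ring

lemma kmsMulVec_succ_eq_geomPrefix (j : ℕ) :
    kmsMulVec lam (j + 1) s j = geomPrefix lam s j := by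
  refine sum_congr rfl fun k hk => ?_
  have hk := mem_range_succ_iff.mp hk
  rw [show ((k : ℤ) - j).natAbs = j - k by omega]

lemma kmsMulVec_sub_mul_kmsMulVec_succ {n j : ℕ} (hj : j + 1 < n) :
    kmsMulVec lam n s j - lam * kmsMulVec lam n s (j + 1)
      = (1 - lam ^ 2) * geomPrefix lam s j := by
  have hsplit : range n = range (j + 1) ∪ Ico (j + 1) n := by
    rw [range_eq_Ico, range_eq_Ico, Ico_union_Ico_eq_Ico (by omega) hj.le]
  have hdisj : Disjoint (range (j + 1)) (Ico (j + 1) n) := by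
    rw [range_eq_Ico]; exact Ico_disjoint_Ico_consecutive 0 (j + 1) n
  have hhead : ∀ k ∈ range (j + 1), lam ^ ((k : ℤ) - j).natAbs * s k
      - lam * (lam ^ ((k : ℤ) - (j + 1 : ℕ)).natAbs * s k)
        = (1 - lam ^ 2) * (lam ^ (j - k) * s k) := by
    intro k hk
    have hk := mem_range_succ_iff.mp hk
    rw [show ((k : ℤ) - j).natAbs = j - k by omega,
      show ((k : ℤ) - (j + 1 : ℕ)).natAbs = j - k + 1 by omega, pow_succ]
    ring
  have htail : ∀ k ∈ Ico (j + 1) n, lam ^ ((k : ℤ) - j).natAbs * s k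
      - lam * (lam ^ ((k : ℤ) - (j + 1 : ℕ)).natAbs * s k) = 0 := by
    intro k hk
    have hk := (mem_Ico.mp hk).1
    rw [show ((k : ℤ) - j).natAbs = k - (j + 1) + 1 by omega,
      show ((k : ℤ) - (j + 1 : ℕ)).natAbs = k - (j + 1) by omega, pow_succ]
    ring
  rw [kmsMulVec, kmsMulVec, mul_sum, ← sum_sub_distrib, hsplit, sum_union hdisj,
    sum_congr rfl hhead, sum_congr rfl htail, sum_const_zero, add_zero, geomPrefix, mul_sum]

variable {n : ℕ} {B : ℝ}

lemma abs_geomPrefix_le (h0 : 0 ≤ lam) (h1 : lam < 1)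
    (hW : ∀ j < n, |kmsMulVec lam n s j| ≤ B)
    {j : ℕ} (hj : j < n) : |geomPrefix lam s j| ≤ B / (1 - lam) := by
  have hpos : 0 < 1 - lam := by linarith
  rw [le_div_iff₀ hpos]
  rcases lt_or_eq_of_le (Nat.succ_le_of_lt hj) with hj' | rfl
  · have hWj := hW j hj
    have hWj' := hW (j + 1) hj'
    have hz : (1 + lam) * (|geomPrefix lam s j| * (1 - lam)) ≤ (1 + lam) * B := calc
      (1 + lam) * (|geomPrefix lam s j| * (1 - lam))
          = |kmsMulVec lam n s j - lam * kmsMulVec lam n s (j + 1)| := by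
        rw [kmsMulVec_sub_mul_kmsMulVec_succ hj', abs_mul,
          abs_of_pos (show 0 < 1 - lam ^ 2 by nlinarith)]
        ring
      _ ≤ |kmsMulVec lam n s j| + lam * |kmsMulVec lam n s (j + 1)| := by
        exact (abs_sub _ _).trans_eq (by rw [abs_mul, abs_of_nonneg h0])
      _ ≤ (1 + lam) * B := by nlinarith
    exact le_of_mul_le_mul_left hz (by linarith)
  · have hWj := hW j hj
    rw [kmsMulVec_succ_eq_geomPrefix] at hWj
    nlinarith [abs_nonneg (geomPrefix lam s j)]

lemma abs_le_of_abs_kmsMulVec_le (h0 : 0 ≤ lam) (h1 : lam < 1)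
    (hW : ∀ j < n, |kmsMulVec lam n s j| ≤ B)
    {i : ℕ} (hi : i < n) : |s i| ≤ 2 * B / (1 - lam) := by
  have hB : 0 ≤ B / (1 - lam) := (abs_nonneg _).trans (abs_geomPrefix_le h0 h1 hW hi)
  rcases i with _ | m
  · rw [← geomPrefix_zero (lam := lam) (s := s), mul_div_assoc]
    linarith [abs_geomPrefix_le h0 h1 hW hi]
  · have hz := abs_geomPrefix_le h0 h1 hW hi
    have hz' := abs_geomPrefix_le h0 h1 hW (Nat.lt_of_succ_lt hi)
    calc |s (m + 1)| = |geomPrefix lam s (m + 1) - lam * geomPrefix lam s m| := by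
          rw [geomPrefix_succ]; ring_nf
      _ ≤ |geomPrefix lam s (m + 1)| + lam * |geomPrefix lam s m| := by
          exact (abs_sub _ _).trans_eq (by rw [abs_mul, abs_of_nonneg h0])
      _ ≤ 2 * B / (1 - lam) := by
          rw [mul_div_assoc]; nlinarith

end KacMurdockSzego

lemma sum_pow_natAbs_mul_eq_kmsMulVec {n : ℕ} (lam : ℝ) (idx : ℕ → Fin n) (g : ℕ → ℝ)
    (I : Finset ℕ) (j : ℕ) : ∑ t ∈ I, lam ^ ((idx t : ℤ) - j).natAbs * g t
      = kmsMulVec lam n (fun k => ∑ t ∈ I with (idx t : ℕ) = k, g t) j := by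
  rw [kmsMulVec, ← sum_fiberwise_of_maps_to (g := fun t => (idx t : ℕ)) (t := range n)
    fun t _ => mem_range.2 (idx t).isLt]
  refine sum_congr rfl fun k _ => ?_
  rw [mul_sum]
  refine sum_congr rfl fun t ht => ?_
  rw [(mem_filter.1 ht).2]

lemma gamma_mul_kmsMulVec_eq_sub {n : ℕ} {γ lam αstar : ℝ} {idx : ℕ → Fin n} {err : ℕ → ℝ}
    {α : ℕ → Fin n → ℝ}
    (hrec : ∀ t, 1 ≤ t → ∀ j : Fin n,
      α (t + 1) j = α t j + γ * lam ^ ((idx t : ℤ) - (j : ℤ)).natAbs * (αstar - err t))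
    {T : ℕ} (hT : 1 ≤ T) (j : Fin n) :
    γ * kmsMulVec lam n (fun k => ∑ t ∈ Icc 1 T with (idx t : ℕ) = k, (αstar - err t)) j
      = α (T + 1) j - α 1 j := by
  rw [← sum_pow_natAbs_mul_eq_kmsMulVec, mul_sum, ← sum_Icc_sub hT (fun t => α t j)]
  refine sum_congr rfl fun t ht => ?_
  rw [hrec t (mem_Icc.1 ht).1 j]
  ring

theorem stmt_12_general (n : ℕ) (γ lam αstar : ℝ) (hγ : 0 < γ)
    (hlam : lam ∈ Set.Ioo (0 : ℝ) 1)
    (idx : ℕ → Fin n) (err : ℕ → ℝ)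
    (α : ℕ → Fin n → ℝ)
    (hrec : ∀ t, 1 ≤ t → ∀ j : Fin n,
      α (t + 1) j = α t j + γ * lam ^ ((idx t : ℤ) - (j : ℤ)).natAbs * (αstar - err t))
    (ν : ℕ) (hbound : ∀ t, 1 ≤ t → ∀ j : Fin n, α t j ∈ Set.Icc (-(ν : ℝ)) (1 + ν)) :
    ∃ C : ℝ, 0 ≤ C ∧ ∀ T, 1 ≤ T → ∀ i : Fin n,
      |∑ t ∈ (Finset.Icc 1 T).filter (fun t => idx t = i), (αstar - err t)| ≤ C := by
  obtain ⟨hlam0, hlam1⟩ := hlam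
  refine ⟨2 * ((1 + 2 * ν) / γ) / (1 - lam), div_nonneg (by positivity) (by linarith),
    fun T hT i => ?_⟩
  have hkms : ∀ j < n, |kmsMulVec lam n (fun k => ∑ t ∈ Icc 1 T with (idx t : ℕ) = k,
      (αstar - err t)) j| ≤ (1 + 2 * ν) / γ := by
    intro j hj
    obtain ⟨hlast0, hlast1⟩ := hbound (T + 1) (by omega) ⟨j, hj⟩
    obtain ⟨hfirst0, hfirst1⟩ := hbound 1 le_rfl ⟨j, hj⟩
    rw [le_div_iff₀ hγ, ← abs_of_pos hγ, ← abs_mul, mul_comm,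
      gamma_mul_kmsMulVec_eq_sub hrec hT ⟨j, hj⟩, abs_le]
    constructor <;> linarith
  simpa only [Fin.val_inj] using abs_le_of_abs_kmsMulVec_le hlam0.le hlam1 hkms i.isLt

/-- Uniform boundedness of per-cell error sums under WACI. -/
theorem stmt_12 (n : ℕ) (hn : 1 ≤ n) (γ lam αstar : ℝ) (hγ : 0 < γ)
    (hlam : lam ∈ Set.Ioo (0 : ℝ) 1) (hαstar : αstar ∈ Set.Ioo (0 : ℝ) 1)
    (idx : ℕ → Fin n) (err : ℕ → ℝ)
    (herr : ∀ t, 1 ≤ t → err t = 0 ∨ err t = 1)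
    (α : ℕ → Fin n → ℝ)
    (hrec : ∀ t, 1 ≤ t → ∀ j : Fin n,
      α (t + 1) j = α t j + γ * lam ^ ((idx t : ℤ) - (j : ℤ)).natAbs * (αstar - err t))
    (ν : ℕ) (hbound : ∀ t, 1 ≤ t → ∀ j : Fin n, α t j ∈ Set.Icc (-(ν : ℝ)) (1 + ν)) :
    ∃ C : ℝ, 0 ≤ C ∧ ∀ T, 1 ≤ T → ∀ i : Fin n,
      |∑ t ∈ (Finset.Icc 1 T).filter (fun t => idx t = i), (αstar - err t)| ≤ C :=
  stmt_12_general n γ lam αstar hγ hlam idx err α hrec ν hbound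
end

section
/- (Asymptotic conditional coverage of WACI; main theorem.) Let n ≥ 1, γ > 0, λ ∈ (0,1), α* ∈ (0,1). Let idx : ℕ → {1, …, n}, let (err_t)_{t≥1} be a sequence with err_t ∈ {0,1} for every t, and let (α_t)_{t≥1} be a sequence of vectors in ℝ^n satisfying α_{t+1}[j] = α_t[j] + γ·λ^{|idx(t) − j|}·(α* − err_t) for every t ≥ 1 and j ∈ {1, …, n}. Assume there exists ν ∈ ℕ such that α_t[j] ∈ [−ν, 1+ν] for every t ≥ 1 and j ∈ {1, …, n}. Fix i ∈ {1, …, n} such that idx(t) = i for infinitely many t, and for T ≥ 1 let T_i(T) = #{t ≤ T : idx(t) = i}. Then (1/T_i(T))·Σ_{t ≤ T, idx(t) = i} err_t → α* as T → ∞. -/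
/-! The kernel `λ ^ |k - j|` on the grid (a Kac–Murdock–Szegő matrix) has a tridiagonal
inverse, so the indicator of the cell `i` is a fixed combination `Σ_j c_j λ ^ |k - j|`.
Summing the recursion gives `α_{T+1}[j] - α_1[j] = γ Σ_{t ≤ T} λ ^ |idx t - j| (α* - err_t)`,
which is bounded because the iterates stay in `[-ν, 1 + ν]`. The same linear combination of
these bounded sums is `α* T_i(T) - Σ_{t ≤ T, idx t = i} err_t`, so this difference is bounded,
and dividing by `T_i(T) → ∞` gives the claim. -/

open Filter Finset

section Kms

variable (lam : ℝ)

lemma pow_natAbs_sub_add_one {m k : ℤ} (h : m ≤ k) :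
    lam ^ (m - (k + 1)).natAbs = lam * lam ^ (m - k).natAbs := by
  rw [show (m - (k + 1)).natAbs = (m - k).natAbs + 1 by omega, pow_succ']

lemma pow_natAbs_sub_sub_one {m k : ℤ} (h : k ≤ m) :
    lam ^ (m - (k - 1)).natAbs = lam * lam ^ (m - k).natAbs := by
  rw [show (m - (k - 1)).natAbs = (m - k).natAbs + 1 by omega, pow_succ']

lemma kms_second_difference (m k : ℤ) :
    (1 + lam ^ 2) * lam ^ (m - k).natAbs - lam * lam ^ (m - (k - 1)).natAbs
      - lam * lam ^ (m - (k + 1)).natAbs = if m = k then 1 - lam ^ 2 else 0 := by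
  rcases lt_trichotomy m k with hmk | rfl | hmk
  · have h₁ := pow_natAbs_sub_add_one lam (m := m) (k := k - 1) (by omega)
    have h₂ := pow_natAbs_sub_add_one lam hmk.le
    rw [sub_add_cancel] at h₁
    rw [if_neg hmk.ne, h₂, h₁]
    ring
  · rw [if_pos rfl, show (m - m).natAbs = 0 by omega, show (m - (m - 1)).natAbs = 1 by omega,
      show (m - (m + 1)).natAbs = 1 by omega]
    ring
  · have h₁ := pow_natAbs_sub_sub_one lam (m := m) (k := k + 1) (by omega)
    have h₂ := pow_natAbs_sub_sub_one lam hmk.le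
    rw [add_sub_cancel_right] at h₁
    rw [if_neg hmk.ne', h₂, h₁]
    ring

end Kms

lemma Fin.sum_ite_intCast_eq {M : Type*} [AddCommMonoid M] (n : ℕ) (k : ℤ) (f : ℤ → M) :
    ∑ j : Fin n, (if (j : ℤ) = k then f j else 0) = if 0 ≤ k ∧ k < n then f k else 0 := by
  split_ifs with hk
  · lift k to ℕ using hk.1
    have hkn : k < n := by exact_mod_cast hk.2
    rw [sum_eq_single ⟨k, hkn⟩
      (fun j _ hj => if_neg fun h => hj (Fin.ext (by simpa using h))) (by simp)]
    simp
  · exact sum_eq_zero fun j _ => if_neg fun h => hk ⟨by omega, by omega⟩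

theorem exists_kms_inverse_row {lam : ℝ} (hlam : lam ^ 2 ≠ 1) {n : ℕ} (i : Fin n) :
    ∃ c : Fin n → ℝ, ∀ m : Fin n,
      ∑ j : Fin n, c j * lam ^ ((m : ℤ) - j).natAbs = if m = i then 1 else 0 := by
  let a : ℝ := 1 + lam ^ 2 - (if 0 ≤ (i : ℤ) - 1 then 0 else lam ^ 2)
    - (if (i : ℤ) + 1 < n then 0 else lam ^ 2)
  refine ⟨fun j => ((if (j : ℤ) = i then a else 0) - (if (j : ℤ) = i - 1 then lam else 0)
      - (if (j : ℤ) = i + 1 then lam else 0)) / (1 - lam ^ 2), fun m => ?_⟩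
  let P : ℤ → ℝ := fun k => lam ^ ((m : ℤ) - k).natAbs
  have hsum (k : ℤ) (b : ℝ) : ∑ j : Fin n, (if (j : ℤ) = k then b else 0) * P j =
      if 0 ≤ k ∧ k < n then b * P k else 0 := by
    simpa only [ite_mul, zero_mul] using Fin.sum_ite_intCast_eq n k (fun k => b * P k)
  have hi : (i : ℤ) < n := by exact_mod_cast i.isLt
  have hm : (m : ℤ) < n := by exact_mod_cast m.isLt
  -- At an end of the grid the missing neighbour lies beyond `m`, where the kernel is geometric.
  have hleft : (if 0 ≤ (i : ℤ) - 1 ∧ (i : ℤ) - 1 < n then lam * P (i - 1) else 0) =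
      lam * P (i - 1) - if 0 ≤ (i : ℤ) - 1 then 0 else lam ^ 2 * P i := by
    by_cases h : 0 ≤ (i : ℤ) - 1
    · simp only [h, true_and, show (i : ℤ) - 1 < n by omega, if_true]; ring
    · simp only [h, false_and, if_false, P,
        pow_natAbs_sub_sub_one lam (show (i : ℤ) ≤ m by omega)]
      ring
  have hright : (if 0 ≤ (i : ℤ) + 1 ∧ (i : ℤ) + 1 < n then lam * P (i + 1) else 0) =
      lam * P (i + 1) - if (i : ℤ) + 1 < n then 0 else lam ^ 2 * P i := by
    by_cases h : (i : ℤ) + 1 < n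
    · simp only [h, and_true, show 0 ≤ (i : ℤ) + 1 by omega, if_true]; ring
    · simp only [h, and_false, if_false, P,
        pow_natAbs_sub_add_one lam (show (m : ℤ) ≤ i by omega)]
      ring
  have hd := kms_second_difference lam m i
  simp_rw [div_mul_eq_mul_div, ← sum_div, sub_mul, sum_sub_distrib]
  rw [hsum, hsum, hsum, if_pos ⟨by positivity, hi⟩, hleft, hright,
    div_eq_iff (sub_ne_zero.2 hlam.symm)]
  simp only [Fin.ext_iff, Nat.cast_inj, a, P] at hd ⊢
  split_ifs at hd ⊢ <;> linear_combination hd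

lemma abs_sum_Icc_le_of_mem_Icc {x y : ℕ → ℝ} {γ a b : ℝ} (hγ : 0 < γ)
    (hrec : ∀ t, 1 ≤ t → x (t + 1) = x t + γ * y t) (hx : ∀ t, 1 ≤ t → x t ∈ Set.Icc a b)
    (T : ℕ) : |∑ t ∈ Icc 1 T, y t| ≤ (b - a) / γ := by
  have htel : x (T + 1) = x 1 + γ * ∑ t ∈ Icc 1 T, y t := by
    induction T with
    | zero => simp
    | succ T ih => rw [hrec (T + 1) (by omega), ih, sum_Icc_succ_top (by omega)]; ring
  obtain ⟨hlo, hhi⟩ := hx (T + 1) (by omega)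
  obtain ⟨hlo₁, hhi₁⟩ := hx 1 le_rfl
  rw [le_div_iff₀ hγ, ← abs_of_pos hγ, ← abs_mul, abs_le]
  constructor <;> linarith

lemma sum_mul_sum_kernel_eq_sum_filter {ι κ R : Type*} [Fintype κ] [DecidableEq κ]
    [CommSemiring R] {K : κ → κ → R} {c : κ → R} {i : κ}
    (hc : ∀ m, ∑ j, c j * K m j = if m = i then 1 else 0) (s : Finset ι) (idx : ι → κ)
    (x : ι → R) : ∑ j, c j * ∑ t ∈ s, K (idx t) j * x t = ∑ t ∈ s with idx t = i, x t := by
  simp_rw [mul_sum, ← mul_assoc]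
  rw [sum_comm, sum_filter]
  refine sum_congr rfl fun t _ => ?_
  rw [← sum_mul, hc, ite_mul, one_mul, zero_mul]

lemma tendsto_card_filter_Icc_atTop {p : ℕ → Prop} [DecidablePred p] {a : ℕ}
    (h : {t | a ≤ t ∧ p t}.Infinite) :
    Tendsto (fun T => #{t ∈ Icc a T | p t}) atTop atTop := by
  refine tendsto_atTop_atTop.2 fun b => ?_
  obtain ⟨s, hs, rfl⟩ := h.exists_subset_card_eq b
  refine ⟨s.sup id, fun T hT => card_le_card fun t ht => ?_⟩
  obtain ⟨hat, hpt⟩ := hs ht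
  exact mem_filter.2 ⟨mem_Icc.2 ⟨hat, (le_sup (f := id) ht).trans hT⟩, hpt⟩

lemma tendsto_div_of_abs_sub_mul_le {ι : Type*} {l : Filter ι} {E N : ι → ℝ} {a K : ℝ}
    (hN : Tendsto N l atTop) (h : ∀ T, |E T - a * N T| ≤ K) :
    Tendsto (fun T => E T / N T) l (nhds a) := by
  rw [← tendsto_sub_nhds_zero_iff]
  refine squeeze_zero_norm' ?_ ((tendsto_const_nhds (x := K)).div_atTop hN)
  filter_upwards [hN.eventually_gt_atTop 0] with T hT
  rw [Real.norm_eq_abs, div_sub' hT.ne', abs_div, abs_of_pos hT, mul_comm]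
  exact div_le_div_of_nonneg_right (h T) hT.le

theorem stmt_13_general (n : ℕ) (γ lam αstar : ℝ) (hγ : 0 < γ)
    (hlam : lam ∈ Set.Ioo (0 : ℝ) 1)
    (idx : ℕ → Fin n) (err : ℕ → ℝ)
    (α : ℕ → Fin n → ℝ)
    (hrec : ∀ t, 1 ≤ t → ∀ j : Fin n,
      α (t + 1) j = α t j + γ * lam ^ ((idx t : ℤ) - (j : ℤ)).natAbs * (αstar - err t))
    (ν : ℕ) (hbound : ∀ t, 1 ≤ t → ∀ j : Fin n, α t j ∈ Set.Icc (-(ν : ℝ)) (1 + ν))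
    (i : Fin n) (hinf : {t : ℕ | 1 ≤ t ∧ idx t = i}.Infinite) :
    Tendsto (fun T : ℕ =>
        (∑ t ∈ (Finset.Icc 1 T).filter (fun t => idx t = i), err t) /
          (((Finset.Icc 1 T).filter (fun t => idx t = i)).card : ℝ))
      atTop (nhds αstar) := by
  obtain ⟨c, hc⟩ := exists_kms_inverse_row (lam := lam) (by nlinarith [hlam.1, hlam.2]) i
  set B : ℝ := (1 + ν - -ν) / γ
  set S : Fin n → ℕ → ℝ :=
    fun j T => ∑ t ∈ Icc 1 T, lam ^ ((idx t : ℤ) - (j : ℤ)).natAbs * (αstar - err t)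
  have hS (T : ℕ) (j : Fin n) : |S j T| ≤ B :=
    abs_sum_Icc_le_of_mem_Icc hγ (fun t ht => by rw [hrec t ht j, mul_assoc])
      (fun t ht => hbound t ht j) T
  refine tendsto_div_of_abs_sub_mul_le (K := ∑ j, |c j| * B)
    (tendsto_natCast_atTop_atTop.comp (tendsto_card_filter_Icc_atTop hinf)) fun T => ?_
  have key := sum_mul_sum_kernel_eq_sum_filter hc (Icc 1 T) idx (fun t => αstar - err t)
  rw [sum_sub_distrib, sum_const, nsmul_eq_mul, mul_comm] at key
  calc _ = |∑ j, c j * S j T| := by rw [key, abs_sub_comm]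
    _ ≤ ∑ j, |c j| * B := (abs_sum_le_sum_abs _ _).trans <| sum_le_sum fun j _ => by
        rw [abs_mul]; exact mul_le_mul_of_nonneg_left (hS T j) (abs_nonneg _)

/-- Asymptotic conditional coverage of WACI (main theorem). -/
theorem stmt_13 (n : ℕ) (hn : 1 ≤ n) (γ lam αstar : ℝ) (hγ : 0 < γ)
    (hlam : lam ∈ Set.Ioo (0 : ℝ) 1) (hαstar : αstar ∈ Set.Ioo (0 : ℝ) 1)
    (idx : ℕ → Fin n) (err : ℕ → ℝ)
    (herr : ∀ t, 1 ≤ t → err t = 0 ∨ err t = 1)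
    (α : ℕ → Fin n → ℝ)
    (hrec : ∀ t, 1 ≤ t → ∀ j : Fin n,
      α (t + 1) j = α t j + γ * lam ^ ((idx t : ℤ) - (j : ℤ)).natAbs * (αstar - err t))
    (ν : ℕ) (hbound : ∀ t, 1 ≤ t → ∀ j : Fin n, α t j ∈ Set.Icc (-(ν : ℝ)) (1 + ν))
    (i : Fin n) (hinf : {t : ℕ | 1 ≤ t ∧ idx t = i}.Infinite) :
    Tendsto (fun T : ℕ =>
        (∑ t ∈ (Finset.Icc 1 T).filter (fun t => idx t = i), err t) /
          (((Finset.Icc 1 T).filter (fun t => idx t = i)).card : ℝ))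
      atTop (nhds αstar) :=
  stmt_13_general n γ lam αstar hγ hlam idx err α hrec ν hbound i hinf
end

section
/- (Asymptotic marginal coverage of WACI.) Let n ≥ 1, γ > 0, λ ∈ (0,1), α* ∈ (0,1). Let idx : ℕ → {1, …, n}, let (err_t)_{t≥1} be a sequence with err_t ∈ {0,1} for every t, and let (α_t)_{t≥1} be a sequence of vectors in ℝ^n satisfying α_{t+1}[j] = α_t[j] + γ·λ^{|idx(t) − j|}·(α* − err_t) for every t ≥ 1 and j ∈ {1, …, n}. Assume there exists ν ∈ ℕ such that α_t[j] ∈ [−ν, 1+ν] for every t ≥ 1 and j ∈ {1, …, n}. Then (1/T)·Σ_{t=1}^{T} err_t → α* as T → ∞. -/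
/-!
The matrix `K = (λ ^ |i - j|)` satisfies `K c = 1` for an explicit vector `c`.
Since every update of WACI adds `γ (α* - err_t)` times a row of `K` to `α_t`, the scalar potential
`β_t = ⟪c, α_t⟫` evolves exactly like the single-level ACI recursion
`β_{t+1} = β_t + γ (α* - err_t)`. The bound on `α_t` bounds `β_t`, so telescoping bounds
`∑_{t ≤ T} (α* - err_t)` uniformly in `T`, and the average of `err_t` tends to `α*`.
-/

open Filter Finset Topology

theorem sum_range_pow_natAbs_sub {R : Type*} [Semiring R] (x : R) {i n : ℕ} (hi : i < n) :
    ∑ j ∈ range n, x ^ ((i : ℤ) - j).natAbs =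
      ∑ k ∈ range (i + 1), x ^ k + x * ∑ k ∈ range (n - 1 - i), x ^ k := by
  induction n, hi using Nat.le_induction with
  | base =>
    rw [← sum_range_reflect, show i + 1 - 1 - i = 0 by omega, range_zero, sum_empty, mul_zero,
      add_zero]
    refine sum_congr rfl fun j hj => ?_
    rw [mem_range] at hj
    congr 1
    omega
  | succ n hin ih =>
    rw [sum_range_succ _ n, ih, show n + 1 - 1 - i = n - 1 - i + 1 by omega,
      sum_range_succ _ (n - 1 - i), mul_add, ← add_assoc, ← pow_succ',
      show ((i : ℤ) - n).natAbs = n - 1 - i + 1 by omega]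

/-- Solves `K c = 1` for the Kac–Murdock–Szegő matrix `K = (x ^ |i - j|)_{i,j < n}`. -/
def kmsWeight {K : Type*} [Field K] (x : K) (n j : ℕ) : K :=
  (1 - x + (if j = 0 then x else 0) + (if j = n - 1 then x else 0)) / (1 + x)

theorem sum_range_pow_natAbs_sub_mul_kmsWeight {K : Type*} [Field K] {x : K} (hx : 1 + x ≠ 0)
    {i n : ℕ} (hi : i < n) :
    ∑ j ∈ range n, x ^ ((i : ℤ) - j).natAbs * kmsWeight x n j = 1 := by
  have h0 : 0 ∈ range n := mem_range.2 (by omega)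
  have hlast : n - 1 ∈ range n := mem_range.2 (by omega)
  simp only [kmsWeight, mul_div_assoc', ← sum_div, mul_add, mul_ite, mul_zero, sum_add_distrib,
    sum_ite_eq', h0, hlast, if_true]
  rw [div_eq_one_iff_eq hx, ← sum_mul, sum_range_pow_natAbs_sub x hi, add_mul, mul_assoc,
    geom_sum_mul_neg, geom_sum_mul_neg, show ((i : ℤ) - (0 : ℕ)).natAbs = i by omega,
    show ((i : ℤ) - (n - 1 : ℕ)).natAbs = n - 1 - i by omega]
  ring

theorem tendsto_average_of_abs_sum_sub_le {a C : ℝ} {e : ℕ → ℝ}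
    (h : ∀ T, |∑ t ∈ Icc 1 T, (a - e t)| ≤ C) :
    Tendsto (fun T : ℕ => (1 / (T : ℝ)) * ∑ t ∈ Icc 1 T, e t) atTop (𝓝 a) := by
  rw [← tendsto_sub_nhds_zero_iff]
  refine squeeze_zero_norm' ?_ (tendsto_const_div_atTop_nhds_zero_nat C)
  filter_upwards [eventually_gt_atTop 0] with T hT
  have hT' : (0 : ℝ) < T := Nat.cast_pos.2 hT
  have hsum : ∑ t ∈ Icc 1 T, (a - e t) = T * a - ∑ t ∈ Icc 1 T, e t := by
    rw [sum_sub_distrib, sum_const, Nat.card_Icc, nsmul_eq_mul, Nat.add_sub_cancel]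
  calc ‖1 / (T : ℝ) * ∑ t ∈ Icc 1 T, e t - a‖ = |∑ t ∈ Icc 1 T, (a - e t)| / T := by
        rw [Real.norm_eq_abs, hsum, ← abs_neg, ← abs_of_pos hT', ← abs_div, abs_of_pos hT']
        congr 1
        field_simp
        ring
    _ ≤ C / T := by gcongr; exact h T

theorem mul_sum_Icc_eq_sub_of_increment {γ a : ℝ} {e β : ℕ → ℝ}
    (hrec : ∀ t, 1 ≤ t → β (t + 1) = β t + γ * (a - e t)) (T : ℕ) :
    γ * ∑ t ∈ Icc 1 T, (a - e t) = β (T + 1) - β 1 := by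
  induction T with
  | zero => simp
  | succ T ih =>
    rw [sum_Icc_succ_top (by omega), mul_add, ih, hrec (T + 1) (by omega)]
    ring

theorem abs_sum_sub_le_of_increment {γ a B : ℝ} {e β : ℕ → ℝ} (hγ : γ ≠ 0)
    (hrec : ∀ t, 1 ≤ t → β (t + 1) = β t + γ * (a - e t)) (hB : ∀ t, 1 ≤ t → |β t| ≤ B)
    (T : ℕ) : |∑ t ∈ Icc 1 T, (a - e t)| ≤ 2 * B / |γ| := by
  rw [le_div_iff₀ (abs_pos.2 hγ), mul_comm, ← abs_mul, mul_sum_Icc_eq_sub_of_increment hrec]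
  linarith [abs_sub (β (T + 1)) (β 1), hB (T + 1) (by omega), hB 1 le_rfl]

theorem stmt_14_general (n : ℕ) (γ lam αstar : ℝ) (hγ : 0 < γ)
    (hlam : lam ∈ Set.Ioo (0 : ℝ) 1)
    (idx : ℕ → Fin n) (err : ℕ → ℝ)
    (α : ℕ → Fin n → ℝ)
    (hrec : ∀ t, 1 ≤ t → ∀ j : Fin n,
      α (t + 1) j = α t j + γ * lam ^ ((idx t : ℤ) - (j : ℤ)).natAbs * (αstar - err t))
    (ν : ℕ) (hbound : ∀ t, 1 ≤ t → ∀ j : Fin n, α t j ∈ Set.Icc (-(ν : ℝ)) (1 + ν)) :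
    Tendsto (fun T : ℕ => (1 / (T : ℝ)) * ∑ t ∈ Finset.Icc 1 T, err t)
      atTop (nhds αstar) := by
  set c : Fin n → ℝ := fun j => kmsWeight lam n j
  have hc (i : Fin n) : ∑ j : Fin n, lam ^ ((i : ℤ) - (j : ℤ)).natAbs * c j = 1 := by
    rw [Fin.sum_univ_eq_sum_range (fun j => lam ^ ((i : ℤ) - j).natAbs * kmsWeight lam n j)]
    exact sum_range_pow_natAbs_sub_mul_kmsWeight (by linarith [hlam.1]) i.isLt
  refine tendsto_average_of_abs_sum_sub_le <| abs_sum_sub_le_of_increment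
    (β := fun t => ∑ j, c j * α t j) (B := ∑ j, |c j| * (1 + ν)) hγ.ne' (fun t ht => ?_)
    (fun t ht => ?_)
  · calc ∑ j, c j * α (t + 1) j
        = ∑ j, c j * α t j + γ * (αstar - err t) *
            ∑ j : Fin n, lam ^ ((idx t : ℤ) - (j : ℤ)).natAbs * c j := by
          simp only [hrec t ht, mul_add, sum_add_distrib, mul_sum]
          congr 1
          exact sum_congr rfl fun j _ => by ring
      _ = ∑ j, c j * α t j + γ * (αstar - err t) := by rw [hc, mul_one]
  · calc |∑ j, c j * α t j| ≤ ∑ j, |c j| * |α t j| := by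
          simpa only [abs_mul] using abs_sum_le_sum_abs (fun j => c j * α t j) univ
      _ ≤ ∑ j, |c j| * (1 + ν) := by
          gcongr with j
          obtain ⟨hlo, hhi⟩ := hbound t ht j
          exact abs_le.2 ⟨by linarith, hhi⟩

/-- Asymptotic marginal coverage of WACI. -/
theorem stmt_14 (n : ℕ) (hn : 1 ≤ n) (γ lam αstar : ℝ) (hγ : 0 < γ)
    (hlam : lam ∈ Set.Ioo (0 : ℝ) 1) (hαstar : αstar ∈ Set.Ioo (0 : ℝ) 1)
    (idx : ℕ → Fin n) (err : ℕ → ℝ)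
    (herr : ∀ t, 1 ≤ t → err t = 0 ∨ err t = 1)
    (α : ℕ → Fin n → ℝ)
    (hrec : ∀ t, 1 ≤ t → ∀ j : Fin n,
      α (t + 1) j = α t j + γ * lam ^ ((idx t : ℤ) - (j : ℤ)).natAbs * (αstar - err t))
    (ν : ℕ) (hbound : ∀ t, 1 ≤ t → ∀ j : Fin n, α t j ∈ Set.Icc (-(ν : ℝ)) (1 + ν)) :
    Tendsto (fun T : ℕ => (1 / (T : ℝ)) * ∑ t ∈ Finset.Icc 1 T, err t)
      atTop (nhds αstar) :=
  stmt_14_general n γ lam αstar hγ hlam idx err α hrec ν hbound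
end
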